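/- arXiv:2511.11900 — 7 statements merged into one kernel-verified Lean document; each statement's English description precedes it below -/
import Mathlib

section
/- Let (X,d) be a metric space and let p, q be two distinct points of X. Define u : X → ℝ by u(x) = d(x,p)·d(p,q)/(d(x,p)+d(x,q)). Then u takes values in [0, d(p,q)] and is 1-Lipschitz. -/
/-- For distinct points `p q` in a metric space `X`, the function
`u x = d(x,p)·d(p,q)/(d(x,p)+d(x,q))` takes values in `[0, d(p,q)]` and is `1`-Lipschitz. -/
theorem stmt0 {X : Type*} [MetricSpace X] (p q : X) (hpq : p ≠ q)
    (u : X → ℝ) (hu : ∀ x, u x = dist x p * dist p q / (dist x p + dist x q)) :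
    (∀ x, u x ∈ Set.Icc (0 : ℝ) (dist p q)) ∧ LipschitzWith 1 u := by
  have hd : (0:ℝ) < dist p q := dist_pos.mpr hpq
  have hden : ∀ x : X, dist p q ≤ dist x p + dist x q := by
    intro x
    calc dist p q ≤ dist p x + dist x q := dist_triangle p x q
      _ = dist x p + dist x q := by rw [dist_comm p x]
  have hpos : ∀ x : X, (0:ℝ) < dist x p + dist x q := fun x => lt_of_lt_of_le hd (hden x)
  have key : ∀ x y : X, u x - u y ≤ dist x y := by
    intro x y
    rw [hu x, hu y]
    set a := dist x p with ha
    set b := dist x q with hb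
    set c := dist y p with hc
    set e := dist y q with he
    set t := dist x y with ht
    have h1 : a ≤ c + t := by rw [ha, hc, ht]; calc dist x p ≤ dist x y + dist y p := dist_triangle x y p
      _ = dist y p + dist x y := add_comm _ _
    have h2 : e ≤ b + t := by rw [he, hb, ht]; calc dist y q ≤ dist y x + dist x q := dist_triangle y x q
      _ = dist x q + dist x y := by rw [dist_comm y x, add_comm]
    have ha0 : 0 ≤ a := dist_nonneg
    have hb0 : 0 ≤ b := dist_nonneg
    have hc0 : 0 ≤ c := dist_nonneg
    have he0 : 0 ≤ e := dist_nonneg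
    have ht0 : 0 ≤ t := dist_nonneg
    have pab : (0:ℝ) < a + b := hpos x
    have pce : (0:ℝ) < c + e := hpos y
    have hdab : dist p q ≤ a + b := hden x
    rw [div_sub_div _ _ pab.ne' pce.ne', div_le_iff₀ (mul_pos pab pce)]
    nlinarith [mul_nonneg (mul_nonneg he0 hd.le) (sub_nonneg.mpr h1),
      mul_nonneg (mul_nonneg hc0 hd.le) (sub_nonneg.mpr h2),
      mul_nonneg (mul_nonneg ht0 (add_nonneg hc0 he0)) (sub_nonneg.mpr hdab)]
  constructor
  · intro x
    rw [hu x]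
    constructor
    · positivity
    · rw [div_le_iff₀ (hpos x)]
      nlinarith [dist_nonneg (x := x) (y := q), hd.le, dist_nonneg (x := x) (y := p)]
  · apply LipschitzWith.of_dist_le_mul
    intro x y
    rw [Real.dist_eq]; simp only [NNReal.coe_one, one_mul]
    rw [abs_sub_le_iff]
    exact ⟨key x y, by rw [dist_comm x y]; exact key y x⟩
end

section
/- Let X be a compact metrizable space, let 𝒞 be a null collection of two-point subsets of X (i.e., for every ε > 0 only finitely many members of 𝒞 have diameter ≥ ε with respect to any fixed compatible metric), let C₀ = {a,b} ∈ 𝒞, and let K > 0. Then there exists a metric d on X compatible with the topology of X such that diam(X) = K = d(a,b) and diam(C) ≤ K/2 for every C ∈ 𝒞 with C ≠ C₀. -/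
/-!
The metric is `max (min d (K / 2)) |g x - g y|` for a continuous `g` with `|g a - g b| = K`,
oscillation `K`, and `|g x - g y| ≤ K / 2` on every other pair of `𝒞`: the truncated term keeps
the topology and never exceeds `K / 2`, so `g` alone decides which pairs are long.

For `g` we rescale the ramp `min (d a ·) δ - min (d b ·) δ`, which works as soon as no pair other
than `{a, b}` has one point `δ`-close to `a` and the other `δ`-close to `b`. Such a pair is longer
than `d a b / 2` when `δ` is small, so by nullness only finitely many pairs can violate this, and
each of them stops doing so once `δ` is smaller still.
-/

open Set Metric Filter Topology

theorem min_le_min_add_min {u v w c : ℝ} (hv : 0 ≤ v) (hw : 0 ≤ w) (hc : 0 ≤ c)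
    (h : u ≤ v + w) : min u c ≤ min v c + min w c := by
  simp only [min_def]
  split_ifs <;> linarith

section PseudoMetric
variable {X : Type*} [PseudoMetricSpace X]

theorem diam_univ_eq_of_dist_eq {K : ℝ} {a b : X} (hab : dist a b = K)
    (hle : ∀ x y : X, dist x y ≤ K) : diam (univ : Set X) = K := by
  have hK : 0 ≤ K := hab ▸ dist_nonneg
  refine le_antisymm (diam_le_of_forall_dist_le hK fun x _ y _ => hle x y) ?_
  exact hab ▸ dist_le_diam_of_mem (isBounded_iff.2 ⟨K, fun x _ y _ => hle x y⟩) trivial trivial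

theorem finite_setOf_pair_mem_le_dist {𝒞 : Set (Set X)} (hfin : ∀ C ∈ 𝒞, C.Finite)
    (hnull : ∀ ε > 0, {C | C ∈ 𝒞 ∧ ε ≤ diam C}.Finite) {ε : ℝ} (hε : 0 < ε) :
    {p : X × X | {p.1, p.2} ∈ 𝒞 ∧ ε ≤ dist p.1 p.2}.Finite := by
  refine ((hnull ε hε).biUnion fun C hC => (hfin C hC.1).prod (hfin C hC.1)).subset ?_
  rintro ⟨x, y⟩ ⟨hxy, hdist⟩
  exact mem_biUnion (x := {x, y}) ⟨hxy, by rwa [diam_pair]⟩ ⟨by simp, by simp⟩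

def pairRamp (a b : X) (δ : ℝ) (x : X) : ℝ := min (dist a x) δ - min (dist b x) δ

section pairRamp
variable {a b : X} {δ : ℝ}

theorem continuous_pairRamp : Continuous (pairRamp a b δ) := by
  unfold pairRamp
  fun_prop

theorem abs_pairRamp_le (hδ : 0 ≤ δ) (x : X) : |pairRamp a b δ x| ≤ δ := by
  unfold pairRamp
  rw [abs_le]
  constructor <;> linarith [min_le_right (dist a x) δ, min_le_right (dist b x) δ,
    le_min dist_nonneg hδ (a := dist a x), le_min dist_nonneg hδ (a := dist b x)]

theorem pairRamp_left (hδ : 0 ≤ δ) (h : δ ≤ dist a b) : pairRamp a b δ a = -δ := by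
  simp [pairRamp, dist_comm b a, min_eq_right h, min_eq_left hδ]

theorem pairRamp_right (hδ : 0 ≤ δ) (h : δ ≤ dist a b) : pairRamp a b δ b = δ := by
  simp [pairRamp, min_eq_right h, min_eq_left hδ]

theorem pairRamp_sub_le (hδ : 0 ≤ δ) {p q : X} (h : dist a p < δ → δ ≤ dist b q) :
    pairRamp a b δ q - pairRamp a b δ p ≤ δ := by
  have hq := abs_le.1 (abs_pairRamp_le (a := a) (b := b) hδ q)
  have hp := abs_le.1 (abs_pairRamp_le (a := a) (b := b) hδ p)
  rcases lt_or_ge (dist a p) δ with hap | hap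
  · have : pairRamp a b δ q ≤ 0 := by
      simp only [pairRamp, min_eq_right (h hap)]
      linarith [min_le_right (dist a q) δ]
    linarith
  · have : 0 ≤ pairRamp a b δ p := by
      simp only [pairRamp, min_eq_right hap]
      linarith [min_le_right (dist b p) δ]
    linarith

end pairRamp

end PseudoMetric

section Metric
variable {X : Type*} [MetricSpace X]

theorem eventually_forall_dist_lt_imp_le_dist {R : Set (X × X)} {a b : X} (hab : a ≠ b)
    (hR : ∀ ε > 0, {p ∈ R | ε ≤ dist p.1 p.2}.Finite) (habR : (a, b) ∉ R) :
    ∀ᶠ δ in 𝓝[>] (0 : ℝ), ∀ p ∈ R, dist a p.1 < δ → δ ≤ dist b p.2 := by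
  have hD : 0 < dist a b := dist_pos.2 hab
  have hlong : ∀ᶠ δ in 𝓝[>] (0 : ℝ), ∀ p ∈ {p ∈ R | dist a b / 2 ≤ dist p.1 p.2},
      dist a p.1 < δ → δ ≤ dist b p.2 := by
    refine (hR _ (by positivity)).eventually_all.2 fun p hp => ?_
    have hne : p.1 ≠ a ∨ p.2 ≠ b := by
      by_contra! h
      exact habR (by rw [← h.1, ← h.2]; exact hp.1)
    rcases hne with h | h
    · filter_upwards [nhdsWithin_le_nhds (eventually_lt_nhds (dist_pos.2 h.symm))]
        with δ hδ hap
      exact absurd hap hδ.not_gt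
    · filter_upwards [nhdsWithin_le_nhds (eventually_lt_nhds (dist_pos.2 h.symm))]
        with δ hδ _
      exact hδ.le
  have hsmall : ∀ᶠ δ in 𝓝[>] (0 : ℝ), δ ≤ dist a b / 4 :=
    nhdsWithin_le_nhds (eventually_le_nhds (by positivity))
  filter_upwards [hlong, hsmall] with δ hδlong hδ p hp hap
  by_cases hp_long : dist a b / 2 ≤ dist p.1 p.2
  · exact hδlong p ⟨hp, hp_long⟩ hap
  · by_contra! hbp
    linarith [dist_triangle4 a p.1 p.2 b, dist_comm p.2 b]

theorem exists_separating_function {𝒞 : Set (Set X)} (hfin : ∀ C ∈ 𝒞, C.Finite)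
    (hnull : ∀ ε > 0, {C | C ∈ 𝒞 ∧ ε ≤ diam C}.Finite) {a b : X} (hab : a ≠ b)
    {K : ℝ} (hK : 0 < K) :
    ∃ g : X → ℝ, Continuous g ∧ (∀ x y, |g x - g y| ≤ K) ∧ |g a - g b| = K ∧
      ∀ x y, {x, y} ∈ 𝒞 → ({x, y} : Set X) ≠ {a, b} → |g x - g y| ≤ K / 2 := by
  set R : Set (X × X) := {p | {p.1, p.2} ∈ 𝒞 ∧ ({p.1, p.2} : Set X) ≠ {a, b}}
  have hRnull : ∀ ε > 0, {p ∈ R | ε ≤ dist p.1 p.2}.Finite := fun ε hε =>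
    (finite_setOf_pair_mem_le_dist hfin hnull hε).subset fun p hp => ⟨hp.1.1, hp.2⟩
  obtain ⟨δ, ⟨hsep, hδab⟩, hδ : 0 < δ⟩ :=
    (((eventually_forall_dist_lt_imp_le_dist hab hRnull (by simp [R])).and
      (nhdsWithin_le_nhds (eventually_le_nhds (dist_pos.2 hab)))).and self_mem_nhdsWithin).exists
  have habs : ∀ x y, |K / (2 * δ) * pairRamp a b δ x - K / (2 * δ) * pairRamp a b δ y|
      = K / (2 * δ) * |pairRamp a b δ x - pairRamp a b δ y| := fun x y => by
    rw [← mul_sub, abs_mul, abs_of_pos (by positivity)]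
  refine ⟨fun x => K / (2 * δ) * pairRamp a b δ x, continuous_const.mul continuous_pairRamp,
    fun x y => ?_, ?_, fun x y hxy hne => ?_⟩ <;> simp only [habs]
  · calc K / (2 * δ) * |pairRamp a b δ x - pairRamp a b δ y| ≤ K / (2 * δ) * (2 * δ) := by
          gcongr
          linarith [abs_sub (pairRamp a b δ x) (pairRamp a b δ y),
            abs_pairRamp_le (a := a) (b := b) hδ.le x, abs_pairRamp_le (a := a) (b := b) hδ.le y]
      _ = K := by field_simp
  · rw [pairRamp_left hδ.le hδab, pairRamp_right hδ.le hδab, show -δ - δ = -(2 * δ) by ring,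
      abs_neg, abs_of_pos (by positivity)]
    field_simp
  · have hxy : (x, y) ∈ R := ⟨hxy, hne⟩
    have hyx : (y, x) ∈ R := ⟨by rwa [pair_comm], by rwa [pair_comm]⟩
    calc K / (2 * δ) * |pairRamp a b δ x - pairRamp a b δ y| ≤ K / (2 * δ) * δ := by
          gcongr
          exact abs_sub_le_iff.2
            ⟨pairRamp_sub_le hδ.le (hsep _ hyx), pairRamp_sub_le hδ.le (hsep _ hxy)⟩
      _ = K / 2 := by field_simp

section truncGraph
variable {c : ℝ} {g : X → ℝ}

theorem isOpen_iff_truncGraphDist (hc : 0 < c) (hg : Continuous g) (s : Set X) :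
    IsOpen s ↔ ∀ x ∈ s, ∃ ε > 0, ∀ y, max (min (dist x y) c) |g x - g y| < ε → y ∈ s := by
  rw [Metric.isOpen_iff]
  refine forall₂_congr fun x _ => ⟨?_, ?_⟩
  · rintro ⟨ε, hε, hball⟩
    refine ⟨min ε c, lt_min hε hc, fun y hy => hball ?_⟩
    obtain ⟨hyε, hyc⟩ := lt_min_iff.1 ((le_max_left _ _).trans_lt hy)
    have hxy : dist x y < c := (min_lt_iff.1 hyc).resolve_right (lt_irrefl c)
    rw [min_eq_left hxy.le] at hyε
    rwa [mem_ball, dist_comm]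
  · rintro ⟨ε, hε, h⟩
    obtain ⟨δ, hδ, hgδ⟩ := Metric.continuous_iff.1 hg x ε hε
    refine ⟨min δ ε, lt_min hδ hε, fun y hy => h y (max_lt ?_ ?_)⟩
    · rw [mem_ball, dist_comm] at hy
      exact (min_le_left _ _).trans_lt (hy.trans_le (min_le_right _ _))
    · rw [mem_ball] at hy
      have := hgδ y (hy.trans_le (min_le_left _ _))
      rwa [Real.dist_eq, abs_sub_comm] at this

abbrev truncGraphMetric (hc : 0 < c) (hg : Continuous g) : MetricSpace X :=
  MetricSpace.ofDistTopology (fun x y => max (min (dist x y) c) |g x - g y|)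
    (fun x => by simp [hc.le])
    (fun x y => by rw [dist_comm, abs_sub_comm])
    (fun x y z => (max_le_max
      (min_le_min_add_min dist_nonneg dist_nonneg hc.le (dist_triangle x y z))
      (abs_sub_le (g x) (g y) (g z))).trans max_add_add_le_max_add_max)
    (isOpen_iff_truncGraphDist hc hg)
    (fun x y h => dist_le_zero.1 <| by
      have := (le_max_left _ _).trans h.le
      rwa [min_le_iff, or_iff_left hc.not_ge] at this)

theorem truncGraphMetric_dist (hc : 0 < c) (hg : Continuous g) (x y : X) :
    (truncGraphMetric hc hg).dist x y = max (min (dist x y) c) |g x - g y| := rfl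

theorem truncGraphMetric_dist_le {K : ℝ} (hc : 0 < c) (hg : Continuous g) (hcK : c ≤ K)
    (hgK : ∀ x y, |g x - g y| ≤ K) (x y : X) : (truncGraphMetric hc hg).dist x y ≤ K :=
  max_le ((min_le_right _ _).trans hcK) (hgK x y)

theorem truncGraphMetric_dist_eq {K : ℝ} (hc : 0 < c) (hg : Continuous g) (hcK : c ≤ K)
    {a b : X} (hab : |g a - g b| = K) : (truncGraphMetric hc hg).dist a b = K := by
  rw [truncGraphMetric_dist, hab]
  exact max_eq_right ((min_le_right _ _).trans hcK)

theorem truncGraphMetric_diam_pair_le (hc : 0 < c) (hg : Continuous g) {x y : X}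
    (hxy : |g x - g y| ≤ c) : @diam X (truncGraphMetric hc hg).toPseudoMetricSpace {x, y} ≤ c := by
  rw [@diam_pair X x y (truncGraphMetric hc hg).toPseudoMetricSpace]
  exact max_le (min_le_right _ _) hxy

end truncGraph

end Metric

theorem stmt1_general {X : Type*} [TopologicalSpace X]
    (m₀ : MetricSpace X)
    (hm₀ : m₀.toUniformSpace.toTopologicalSpace = ‹TopologicalSpace X›)
    (𝒞 : Set (Set X)) (h2 : ∀ C ∈ 𝒞, C.ncard = 2)
    (hnull : ∀ ε > (0 : ℝ),
      {C | C ∈ 𝒞 ∧ ε ≤ @Metric.diam X m₀.toPseudoMetricSpace C}.Finite)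
    (a b : X) (hab : a ≠ b)
    (K : ℝ) (hK : 0 < K) :
    ∃ m : MetricSpace X,
      m.toUniformSpace.toTopologicalSpace = ‹TopologicalSpace X› ∧
      @Metric.diam X m.toPseudoMetricSpace Set.univ = K ∧
      @dist X m.toPseudoMetricSpace.toDist a b = K ∧
      ∀ C ∈ 𝒞, C ≠ ({a, b} : Set X) →
        @Metric.diam X m.toPseudoMetricSpace C ≤ K / 2 := by
  subst hm₀
  obtain ⟨g, hg, hgK, hgab, hg𝒞⟩ := exists_separating_function
    (fun C hC => finite_of_ncard_ne_zero (by simp [h2 C hC])) hnull hab hK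
  have hK2 : K / 2 ≤ K := by linarith
  have hdab := truncGraphMetric_dist_eq (half_pos hK) hg hK2 hgab
  refine ⟨truncGraphMetric (half_pos hK) hg, rfl,
    @diam_univ_eq_of_dist_eq X (truncGraphMetric (half_pos hK) hg).toPseudoMetricSpace K a b hdab
      (truncGraphMetric_dist_le _ hg hK2 hgK), hdab, ?_⟩
  rintro C hC hne
  obtain ⟨x, y, -, rfl⟩ := ncard_eq_two.1 (h2 C hC)
  exact truncGraphMetric_diam_pair_le _ hg (hg𝒞 x y hC hne)

/-- Given a compact metrizable space `X` (metrized by `m₀`), a null collection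
`𝒞` of two-point subsets, a distinguished pair `C₀ = {a,b} ∈ 𝒞` and `K > 0`, there is a
compatible metric `m` on `X` with `diam X = K` attained by `d(a,b)` and `diam C ≤ K/2` for
every other member of `𝒞`. -/
theorem stmt1 {X : Type*} [TopologicalSpace X] [CompactSpace X]
    (m₀ : MetricSpace X)
    (hm₀ : m₀.toUniformSpace.toTopologicalSpace = ‹TopologicalSpace X›)
    (𝒞 : Set (Set X)) (h2 : ∀ C ∈ 𝒞, C.ncard = 2)
    (hnull : ∀ ε > (0 : ℝ),
      {C | C ∈ 𝒞 ∧ ε ≤ @Metric.diam X m₀.toPseudoMetricSpace C}.Finite)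
    (a b : X) (hab : a ≠ b) (hC₀ : ({a, b} : Set X) ∈ 𝒞)
    (K : ℝ) (hK : 0 < K) :
    ∃ m : MetricSpace X,
      m.toUniformSpace.toTopologicalSpace = ‹TopologicalSpace X› ∧
      @Metric.diam X m.toPseudoMetricSpace Set.univ = K ∧
      @dist X m.toPseudoMetricSpace.toDist a b = K ∧
      ∀ C ∈ 𝒞, C ≠ ({a, b} : Set X) →
        @Metric.diam X m.toPseudoMetricSpace C ≤ K / 2 :=
  stmt1_general m₀ hm₀ 𝒞 h2 hnull a b hab K hK
end

section
/- Let T be a tree (connected acyclic simple graph), let S ⊆ T be a subtree, and suppose X is a metric space written as a union X = X_S ∪ ⋃_{v ∈ V'} X_v, where V' indexes the vertices of T outside S, each X_v is compact, each X_v intersects X_S nontrivially, X_S is compact, and the collection {X_v : v ∈ V'} is null (for every ε > 0 only finitely many X_v have diameter ≥ ε). Then X is compact. -/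
/-!
Cover the compact core `XS` by finitely many members of an open cover; their union contains a
uniform thickening of `XS`. A piece of diameter smaller than the thickening radius meets `XS`
and so lies inside it, while only finitely many pieces are larger, and their compact union is
again finitely covered.
-/

open Set Metric

theorem isCompact_of_forall_isOpen_superset {X : Type*} [TopologicalSpace X] {K s : Set X}
    (hK : IsCompact K) (hKs : K ⊆ s)
    (h : ∀ U, IsOpen U → K ⊆ U → ∃ L ⊆ s, IsCompact L ∧ s ⊆ U ∪ L) :
    IsCompact s := by
  refine isCompact_of_finite_subcover fun U hU hsU => ?_
  obtain ⟨t₀, hKt₀⟩ := hK.elim_finite_subcover U hU (hKs.trans hsU)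
  obtain ⟨L, hLs, hL, hsL⟩ := h _ (isOpen_biUnion fun i _ => hU i) hKt₀
  obtain ⟨t₁, hLt₁⟩ := hL.elim_finite_subcover U hU (hLs.trans hsU)
  classical
  exact ⟨t₀ ∪ t₁,
    Finset.set_biUnion_union t₀ t₁ U ▸ hsL.trans (union_subset_union_right _ hLt₁)⟩

theorem subset_thickening_of_diam_lt {X : Type*} [PseudoMetricSpace X] {K s : Set X} {δ : ℝ}
    (hs : Bornology.IsBounded s) (hsK : (s ∩ K).Nonempty) (hδ : diam s < δ) :
    s ⊆ thickening δ K := by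
  obtain ⟨z, hzs, hzK⟩ := hsK
  exact fun x hx => mem_thickening_iff.2 ⟨z, hzK, (dist_le_diam_of_mem hs hx hzs).trans_lt hδ⟩

theorem isCompact_union_iUnion_of_null {X : Type*} [PseudoMetricSpace X] {ι : Type*}
    {K : Set X} {s : ι → Set X} (hK : IsCompact K) (hs : ∀ i, IsCompact (s i))
    (hmeet : ∀ i, (s i ∩ K).Nonempty)
    (hnull : ∀ ε > (0 : ℝ), {i | ε ≤ diam (s i)}.Finite) :
    IsCompact (K ∪ ⋃ i, s i) := by
  refine isCompact_of_forall_isOpen_superset hK subset_union_left fun U hU hKU => ?_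
  obtain ⟨δ, hδ, hδU⟩ := hK.exists_thickening_subset_open hU hKU
  refine ⟨⋃ i ∈ {i | δ ≤ diam (s i)}, s i,
    (iUnion₂_subset_iUnion _ s).trans subset_union_right,
    (hnull δ hδ).isCompact_biUnion fun i _ => hs i, ?_⟩
  refine union_subset (hKU.trans subset_union_left) (iUnion_subset fun i => ?_)
  by_cases hi : δ ≤ diam (s i)
  · exact (subset_biUnion_of_mem (u := s) hi).trans subset_union_right
  · exact (subset_thickening_of_diam_lt (hs i).isBounded (hmeet i) (not_le.1 hi)).trans
      (hδU.trans subset_union_left)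

/-- A metric space covered by a compact subspace `XS` together with a null family
of compact subspaces `Xv i`, each meeting `XS`, is compact. -/
theorem stmt4 {X : Type*} [MetricSpace X] {ι : Type*}
    (XS : Set X) (Xv : ι → Set X)
    (hS : IsCompact XS) (hv : ∀ i, IsCompact (Xv i))
    (hmeet : ∀ i, (Xv i ∩ XS).Nonempty)
    (hcover : XS ∪ ⋃ i, Xv i = Set.univ)
    (hnull : ∀ ε > (0 : ℝ), {i | ε ≤ Metric.diam (Xv i)}.Finite) :
    CompactSpace X :=
  isCompact_univ_iff.1 (hcover ▸ isCompact_union_iUnion_of_null hS hv hmeet hnull)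
end

section
/- Let X be a connected graph (as a metric space with the path metric) and Y a connected graph, and let φ : X → Y be a surjective simplicial Lipschitz map. Suppose X is Gromov hyperbolic and there is M > 0 such that for all vertices x, x' of X with d_Y(φ(x), φ(x')) ≤ 1 and every geodesic α in X from x to x', the image φ(α) has diameter at most M in Y. Then Y is Gromov hyperbolic. -/
/-- The Gromov product `(x,y)_w` in a graph, computed from the path metric. -/
noncomputable def gromovProduct {V : Type*} (G : SimpleGraph V) (w x y : V) : ℝ :=
  ((G.dist w x : ℝ) + (G.dist w y : ℝ) - (G.dist x y : ℝ)) / 2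

/-- Gromov hyperbolicity of a graph (with its path metric), via the four-point condition
on Gromov products. -/
def IsGromovHyperbolicGraph {V : Type*} (G : SimpleGraph V) : Prop :=
  ∃ δ : ℝ, 0 ≤ δ ∧ ∀ w x y z : V,
    min (gromovProduct G w x y) (gromovProduct G w y z) - δ ≤ gromovProduct G w x z

/-!
Hyperbolicity of `G` makes its geodesic triangles thin, so the images under `φ` of `G`-geodesics
between lifts of `a` and `b` are coarse paths from `a` to `b` in `H`, of diameter `≤ M` when
`d(a, b) ≤ 1`, with uniformly thin triangles: the hypotheses of Bowditch's "guessing geodesics"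
criterion. By bisection such a path stays within `M + D k` of any walk of length `≤ 2 ^ k` with the
same ends. If a point of the path were at distance `r` from a geodesic `σ`, cutting `σ` at distance
`3 r` on both sides of a nearest point would, by induction on the outer pieces and bisection on the
middle one, force `r ≤ M + 6 D + D log₂ r`. So paths lie uniformly close to geodesics and, by a
discrete intermediate value argument, conversely. Hence geodesic triangles of `H` are thin, and thin
triangles give the four-point condition.
-/

theorem Nat.mul_self_le_two_pow {k : ℕ} (hk : 4 ≤ k) : k * k ≤ 2 ^ k := by
  induction k, hk using Nat.le_induction with
  | base => norm_num
  | succ n hn ih => rw [pow_succ]; nlinarith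

theorem Nat.add_mul_log_lt {A B r : ℕ} (hr : (A + 4 * B + 1) ^ 2 ≤ r) :
    A + B * Nat.log 2 r < r := by
  have : 0 < r := lt_of_lt_of_le (by positivity) hr
  have hs : A + 4 * B + 1 ≤ r.sqrt := Nat.le_sqrt.2 (by nlinarith)
  have hss : r.sqrt * r.sqrt ≤ r := Nat.sqrt_le r
  suffices Nat.log 2 r ≤ r.sqrt + 3 by nlinarith
  by_contra! h
  have : Nat.log 2 r ≤ r.sqrt := Nat.le_sqrt.2 <|
    (Nat.mul_self_le_two_pow (by omega)).trans (Nat.pow_log_le_self 2 (by positivity))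
  omega

theorem List.exists_mem_eq_of_isChain {α : Type*} {f : α → ℕ} :
    ∀ {l : List α} {x y : α}, l.IsChain (fun u v => f v ≤ f u + 1) →
      l.head? = some x → l.getLast? = some y → ∀ {i : ℕ}, f x ≤ i → i ≤ f y → ∃ w ∈ l, f w = i
  | [], _, _, _, hx, _, _, _, _ => by simp at hx
  | [z], x, y, _, hx, hy, i, hxi, hiy => by
    simp only [head?_cons, Option.some.injEq, getLast?_singleton] at hx hy
    subst hx hy
    exact ⟨z, mem_singleton_self z, by omega⟩
  | z :: z' :: l, x, y, hl, hx, hy, i, hxi, hiy => by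
    simp only [head?_cons, Option.some.injEq] at hx
    subst hx
    rw [isChain_cons_cons] at hl
    rcases eq_or_lt_of_le hxi with h | h
    · exact ⟨z, mem_cons_self, h⟩
    obtain ⟨w, hw, rfl⟩ := exists_mem_eq_of_isChain hl.2 rfl (by simpa using hy) (by omega) hiy
    exact ⟨w, mem_cons_of_mem _ hw, rfl⟩

namespace SimpleGraph

variable {V : Type*} {G : SimpleGraph V} {u v x y z : V}

theorem Walk.dist_getVert_le (p : G.Walk u v) {i j : ℕ} (hij : i ≤ j) :
    G.dist (p.getVert i) (p.getVert j) ≤ j - i := by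
  have h := dist_le ((p.drop i).take (j - i))
  simp only [Walk.drop_getVert, Walk.take_length, Nat.add_sub_cancel' hij] at h
  omega

theorem Connected.dist_getVert_of_length_eq_dist (hG : G.Connected) {p : G.Walk u v}
    (hp : p.length = G.dist u v) {i j : ℕ} (hij : i ≤ j) (hj : j ≤ p.length) :
    G.dist (p.getVert i) (p.getVert j) = j - i := by
  have hui := p.dist_getVert_le (Nat.zero_le i)
  have hij' := p.dist_getVert_le hij
  have hjv := p.dist_getVert_le hj
  simp only [Walk.getVert_zero, Walk.getVert_length] at hui hjv
  have := hG.dist_triangle (u := u) (v := p.getVert i) (w := v)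
  have := hG.dist_triangle (u := p.getVert i) (v := p.getVert j) (w := v)
  omega

theorem Connected.sub_le_dist_getVert (hG : G.Connected) {p : G.Walk u v}
    (hp : p.length = G.dist u v) (i : ℕ) {j : ℕ} (hj : j ≤ p.length) :
    j - i ≤ G.dist (p.getVert i) (p.getVert j) := by
  rcases le_total i j with h | h
  · exact (hG.dist_getVert_of_length_eq_dist hp h hj).ge
  · omega

theorem Connected.dist_add_dist_of_mem_support (hG : G.Connected) {p : G.Walk u v}
    (hp : p.length = G.dist u v) (hx : x ∈ p.support) :
    G.dist u x + G.dist x v = G.dist u v := by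
  obtain ⟨i, rfl, hi⟩ := Walk.mem_support_iff_exists_getVert.1 hx
  have hui := hG.dist_getVert_of_length_eq_dist hp (Nat.zero_le i) hi
  have hiv := hG.dist_getVert_of_length_eq_dist hp hi le_rfl
  simp only [Walk.getVert_zero, Walk.getVert_length] at hui hiv
  omega

def ThinTriangles (G : SimpleGraph V) (E : ℕ) : Prop :=
  ∀ ⦃x y z : V⦄ (p : G.Walk x y) (q : G.Walk y z) (r : G.Walk x z),
    p.length = G.dist x y → q.length = G.dist y z → r.length = G.dist x z →
    ∀ u ∈ r.support, ∃ v, (v ∈ p.support ∨ v ∈ q.support) ∧ G.dist u v ≤ E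

theorem Connected.exists_mem_support_dist_le_of_gromovProduct_le (hG : G.Connected) {δ : ℝ}
    (hδ : ∀ w x y z : V,
      min (gromovProduct G w x y) (gromovProduct G w y z) - δ ≤ gromovProduct G w x z)
    {p : G.Walk x y} (hp : p.length = G.dist x y) (hu : gromovProduct G u x y ≤ δ) :
    ∃ v ∈ p.support, (G.dist u v : ℝ) ≤ 4 * δ := by
  have hxy := hG.dist_triangle (u := x) (v := u) (w := y)
  rw [dist_comm (u := x) (v := u)] at hxy
  unfold gromovProduct at hu
  rcases le_or_gt (G.dist u x) p.length with h | h
  · -- the point `v` of `p` with `d(x, v) = d(x, u)` has `(u | x, v) = d(u, v) / 2 ≤ (u | v, y)`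
    have hxv := hG.dist_getVert_of_length_eq_dist hp (Nat.zero_le _) h
    have hvy := hG.dist_getVert_of_length_eq_dist hp h le_rfl
    simp only [Walk.getVert_zero, Walk.getVert_length, Nat.sub_zero] at hxv hvy
    set v := p.getVert (G.dist u x)
    have hvy' : (G.dist v y : ℝ) ≤ G.dist u y := by exact_mod_cast (by omega : G.dist v y ≤ _)
    have hxv' : (G.dist x v : ℝ) = G.dist u x := by exact_mod_cast hxv
    refine ⟨v, p.getVert_mem_support _, ?_⟩
    have := hδ u x v y
    rw [sub_le_iff_le_add, min_le_iff] at this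
    unfold gromovProduct at this
    rcases this with h' | h' <;> linarith
  · refine ⟨y, p.end_mem_support, ?_⟩
    have : (G.dist x y : ℝ) < G.dist u x := by exact_mod_cast hp ▸ h
    linarith

theorem Connected.thinTriangles_of_isGromovHyperbolicGraph (hG : G.Connected)
    (h : IsGromovHyperbolicGraph G) : ∃ E, G.ThinTriangles E := by
  obtain ⟨δ, -, hδ⟩ := h
  refine ⟨⌈4 * δ⌉₊, fun x y z p q r hp hq hr u hu => ?_⟩
  have hxz : (G.dist x u : ℝ) + G.dist u z = G.dist x z := by
    exact_mod_cast hG.dist_add_dist_of_mem_support hr hu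
  have hu0 : gromovProduct G u x z = 0 := by
    unfold gromovProduct
    rw [dist_comm (u := u) (v := x)]
    linarith
  have := hδ u x y z
  rw [hu0, sub_le_iff_le_add, zero_add, min_le_iff] at this
  obtain ⟨v, hv, huv⟩ : ∃ v, (v ∈ p.support ∨ v ∈ q.support) ∧ (G.dist u v : ℝ) ≤ 4 * δ := by
    rcases this with h | h
    · obtain ⟨v, hv, huv⟩ := hG.exists_mem_support_dist_le_of_gromovProduct_le hδ hp h
      exact ⟨v, .inl hv, huv⟩
    · obtain ⟨v, hv, huv⟩ := hG.exists_mem_support_dist_le_of_gromovProduct_le hδ hq h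
      exact ⟨v, .inr hv, huv⟩
  exact ⟨v, hv, Nat.cast_le.1 (huv.trans (Nat.le_ceil _))⟩

theorem Connected.dist_add_dist_le_of_mem_support (hG : G.Connected) {p : G.Walk x y}
    (hp : p.length = G.dist x y) (hv : v ∈ p.support) (w : V) :
    G.dist w x + G.dist w y ≤ 2 * G.dist w v + G.dist x y := by
  have := hG.dist_add_dist_of_mem_support hp hv
  have := hG.dist_triangle (u := w) (v := v) (w := x)
  have := hG.dist_triangle (u := w) (v := v) (w := y)
  have : G.dist v x = G.dist x v := dist_comm
  omega

theorem Connected.exists_mem_support_two_mul_dist_le {E : ℕ} (hG : G.Connected)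
    (hE : G.ThinTriangles E) {r : G.Walk x z} (hr : r.length = G.dist x z) (w : V) :
    ∃ u ∈ r.support, 2 * G.dist w u + G.dist x z ≤ G.dist w x + G.dist w z + 4 * E + 1 := by
  obtain ⟨p, hp⟩ := hG.exists_walk_length_eq_dist x w
  obtain ⟨q, hq⟩ := hG.exists_walk_length_eq_dist w z
  have := hG.dist_triangle (u := w) (v := x) (w := z)
  have := hG.dist_triangle (u := x) (v := z) (w := w)
  have : G.dist z w = G.dist w z := dist_comm
  have : G.dist x w = G.dist w x := dist_comm
  -- `u` is the point of `r` at distance `⌊(x | w, z)⌋` from `x`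
  obtain ⟨m, hm⟩ : ∃ m, 2 * m + G.dist w z ≤ G.dist x z + G.dist x w ∧
      G.dist x z + G.dist x w ≤ 2 * m + 1 + G.dist w z :=
    ⟨(G.dist x z + G.dist x w - G.dist w z) / 2, by omega⟩
  have hmr : m ≤ r.length := by omega
  have hxu := hG.dist_getVert_of_length_eq_dist hr (Nat.zero_le m) hmr
  have huz := hG.dist_getVert_of_length_eq_dist hr hmr le_rfl
  simp only [Walk.getVert_zero, Walk.getVert_length, Nat.sub_zero] at hxu huz
  set u := r.getVert m
  refine ⟨u, r.getVert_mem_support m, ?_⟩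
  obtain ⟨v, hv, huv⟩ := hE p q r hp hq hr u (r.getVert_mem_support m)
  have := hG.dist_triangle (u := w) (v := v) (w := u)
  have : G.dist v u = G.dist u v := dist_comm
  rcases hv with hv | hv
  · have := hG.dist_add_dist_of_mem_support hp hv
    have := hG.dist_triangle (u := x) (v := v) (w := u)
    have : G.dist v w = G.dist w v := dist_comm
    omega
  · have := hG.dist_add_dist_of_mem_support hq hv
    have := hG.dist_triangle (u := u) (v := v) (w := z)
    omega

theorem Connected.isGromovHyperbolicGraph_of_thinTriangles {E : ℕ} (hG : G.Connected)
    (hE : G.ThinTriangles E) : IsGromovHyperbolicGraph G := by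
  refine ⟨3 * E + 1, by positivity, fun w x y z => ?_⟩
  obtain ⟨p, hp⟩ := hG.exists_walk_length_eq_dist x y
  obtain ⟨q, hq⟩ := hG.exists_walk_length_eq_dist y z
  obtain ⟨r, hr⟩ := hG.exists_walk_length_eq_dist x z
  obtain ⟨u, hu, hwu⟩ := hG.exists_mem_support_two_mul_dist_le hE hr w
  obtain ⟨v, hv, huv⟩ := hE p q r hp hq hr u hu
  have := hG.dist_triangle (u := w) (v := u) (w := v)
  rw [sub_le_iff_le_add, min_le_iff]
  unfold gromovProduct
  rcases hv with hv | hv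
  · have := hG.dist_add_dist_le_of_mem_support hp hv w
    have h : G.dist w x + G.dist w y + G.dist x z ≤
        G.dist w x + G.dist w z + G.dist x y + 6 * E + 1 := by omega
    left
    have h' : ((G.dist w x + G.dist w y + G.dist x z : ℕ) : ℝ) ≤
        ((G.dist w x + G.dist w z + G.dist x y + 6 * E + 1 : ℕ) : ℝ) := by exact_mod_cast h
    push_cast at h'
    linarith
  · have := hG.dist_add_dist_le_of_mem_support hq hv w
    have h : G.dist w y + G.dist w z + G.dist x z ≤
        G.dist w x + G.dist w z + G.dist y z + 6 * E + 1 := by omega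
    right
    have h' : ((G.dist w y + G.dist w z + G.dist x z : ℕ) : ℝ) ≤
        ((G.dist w x + G.dist w z + G.dist y z + 6 * E + 1 : ℕ) : ℝ) := by exact_mod_cast h
    push_cast at h'
    linarith

-- The data of Bowditch's "guessing geodesics" criterion: `path a b` is a coarse path from `a`
-- to `b`.
structure ThinPathSystem {W : Type*} (H : SimpleGraph W) (M D : ℕ) where
  path : W → W → List W
  head?_path (a b : W) : (path a b).head? = some a
  getLast?_path (a b : W) : (path a b).getLast? = some b
  isChain_path (a b : W) : (path a b).IsChain fun u v => H.dist u v ≤ 1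
  dist_le_of_dist_le_one {a b : W} :
    H.dist a b ≤ 1 → ∀ u ∈ path a b, ∀ v ∈ path a b, H.dist u v ≤ M
  exists_dist_le {a b e u : W} :
    u ∈ path a e → ∃ v, (v ∈ path a b ∨ v ∈ path b e) ∧ H.dist u v ≤ D

namespace ThinPathSystem

variable {W : Type*} {H : SimpleGraph W} {M D : ℕ} (P : ThinPathSystem H M D) {a b : W}

theorem mem_path_left : a ∈ P.path a b :=
  List.mem_of_mem_head? (P.head?_path a b)

theorem exists_dist_le_two_mul (hH : H.Connected) {e u : W} (hu : u ∈ P.path a e) (b c : W) :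
    ∃ w, (w ∈ P.path a b ∨ w ∈ P.path b c ∨ w ∈ P.path c e) ∧ H.dist u w ≤ 2 * D := by
  obtain ⟨v, hv | hv, huv⟩ := P.exists_dist_le (b := b) hu
  · exact ⟨v, .inl hv, by omega⟩
  obtain ⟨w, hw, hvw⟩ := P.exists_dist_le (b := c) hv
  have := hH.dist_triangle (u := u) (v := v) (w := w)
  exact ⟨w, .inr hw, by omega⟩

theorem exists_dist_getVert_le_of_le_add_two_pow (hH : H.Connected) (σ : H.Walk a b) (k : ℕ) :
    ∀ {p q : ℕ}, p ≤ q → q ≤ p + 2 ^ k → ∀ u ∈ P.path (σ.getVert p) (σ.getVert q),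
      ∃ i, p ≤ i ∧ i ≤ q ∧ H.dist u (σ.getVert i) ≤ M + D * k := by
  induction k with
  | zero =>
    intro p q hpq hq u hu
    have := σ.dist_getVert_le hpq
    exact ⟨p, le_rfl, hpq, P.dist_le_of_dist_le_one (by omega) u hu _ P.mem_path_left⟩
  | succ k ih =>
    intro p q hpq hq u hu
    have := pow_succ 2 k
    obtain ⟨v, hv, huv⟩ := P.exists_dist_le (b := σ.getVert (min q (p + 2 ^ k))) hu
    obtain ⟨i, hpi, hiq, hvi⟩ : ∃ i, p ≤ i ∧ i ≤ q ∧ H.dist v (σ.getVert i) ≤ M + D * k := by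
      rcases hv with hv | hv
      · obtain ⟨i, h₁, h₂, h₃⟩ := ih (by omega) (by omega) v hv
        exact ⟨i, h₁, by omega, h₃⟩
      · obtain ⟨i, h₁, h₂, h₃⟩ := ih (by omega) (by omega) v hv
        exact ⟨i, by omega, h₂, h₃⟩
    have := hH.dist_triangle (u := u) (v := v) (w := σ.getVert i)
    exact ⟨i, hpi, hiq, by rw [mul_add_one]; omega⟩

-- Bisection puts `w` within `M + D log₂ (6 r)` of `σ`,
-- which is `< r - 2 D` when `r > (M + 10 D + 1) ^ 2`.
theorem le_of_forall_le_dist_getVert (hH : H.Connected) (σ : H.Walk a b) {r p q : ℕ} {u w : W}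
    (hpq : p ≤ q) (hq : q ≤ p + 6 * r) (hw : w ∈ P.path (σ.getVert p) (σ.getVert q))
    (huw : H.dist u w ≤ 2 * D) (hr : ∀ i, p ≤ i → i ≤ q → r ≤ H.dist u (σ.getVert i)) :
    r ≤ (M + 10 * D + 1) ^ 2 := by
  by_contra! hT
  have hlog := Nat.lt_pow_succ_log_self one_lt_two r
  obtain ⟨i, hpi, hiq, hwi⟩ := P.exists_dist_getVert_le_of_le_add_two_pow hH σ
    (Nat.log 2 r + 4) hpq (by rw [pow_add] at *; omega) w hw
  have := hr i hpi hiq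
  have := hH.dist_triangle (u := u) (v := w) (w := σ.getVert i)
  have := Nat.add_mul_log_lt (A := M + 6 * D) (B := D) (r := r)
    (by rw [show M + 6 * D + 4 * D + 1 = M + 10 * D + 1 by ring]; omega)
  rw [mul_add] at hwi
  omega

theorem exists_dist_getVert_le (hH : H.Connected) {σ : H.Walk a b}
    (hσ : σ.length = H.dist a b) {p q : ℕ} (hpq : p ≤ q) (hqσ : q ≤ σ.length) :
    ∀ u ∈ P.path (σ.getVert p) (σ.getVert q),
      ∃ i, p ≤ i ∧ i ≤ q ∧ H.dist u (σ.getVert i) ≤ (M + 10 * D + 1) ^ 2 := by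
  induction hn : q - p using Nat.strong_induction_on generalizing p q with
  | _ n ih =>
  intro u hu
  obtain ⟨i₀, hi₀, hmin⟩ := (Finset.Icc p q).exists_min_image (fun i => H.dist u (σ.getVert i))
    ⟨p, Finset.mem_Icc.2 ⟨le_rfl, hpq⟩⟩
  simp only [Finset.mem_Icc, and_imp] at hi₀ hmin
  by_contra! hfar
  set r := H.dist u (σ.getVert i₀)
  have hTr : (M + 10 * D + 1) ^ 2 < r := hfar i₀ hi₀.1 hi₀.2
  have hT : M + 10 * D + 1 ≤ (M + 10 * D + 1) ^ 2 := Nat.le_self_pow two_ne_zero _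
  have hnear : ∀ i ≤ q, ∀ w, H.dist u w ≤ 2 * D →
      H.dist w (σ.getVert i) ≤ (M + 10 * D + 1) ^ 2 → i₀ < i + 3 * r ∧ i < i₀ + 3 * r := by
    intro i hiq w huw hwi
    have := hH.sub_le_dist_getVert hσ i (j := i₀) (by omega)
    have := hH.sub_le_dist_getVert hσ i₀ (j := i) (by omega)
    have := hH.dist_triangle (u := σ.getVert i₀) (v := u) (w := σ.getVert i)
    have := hH.dist_triangle (u := u) (v := w) (w := σ.getVert i)
    have : H.dist (σ.getVert i₀) u = r := dist_comm
    have : H.dist (σ.getVert i) (σ.getVert i₀) = H.dist (σ.getVert i₀) (σ.getVert i) := dist_comm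
    omega
  -- Cut `σ` at `3 r` on either side of `i₀`. On the outer pieces, induction gives points of `σ`
  -- too far from `i₀`; the middle piece (and a degenerate outer one) is short enough for bisection.
  have hshort : ∀ {j₁ j₂ w}, p ≤ j₁ → j₁ ≤ j₂ → j₂ ≤ q → j₂ ≤ j₁ + 6 * r →
      w ∈ P.path (σ.getVert j₁) (σ.getVert j₂) → H.dist u w ≤ 2 * D → False :=
    fun h₁ h₂ h₃ h₄ hw huw => (P.le_of_forall_le_dist_getVert hH σ h₂ h₄ hw huw
      fun i hi hi' => hmin i (by omega) (by omega)).not_gt hTr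
  obtain ⟨w, hw, huw⟩ := P.exists_dist_le_two_mul hH hu
    (σ.getVert (max p (i₀ - 3 * r))) (σ.getVert (min q (i₀ + 3 * r)))
  rcases hw with hw | hw | hw
  · by_cases hja : i₀ - 3 * r ≤ p
    · exact hshort le_rfl le_rfl hpq (by omega) (by rwa [max_eq_left hja] at hw) huw
    rw [max_eq_right (by omega)] at hw
    obtain ⟨i, hpi, hiq, hwi⟩ := ih _ (by omega) (by omega) (by omega) rfl w hw
    have := hnear i (by omega) w huw hwi
    omega
  · exact hshort (by omega) (by omega) (by omega) (by omega) hw huw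
  · by_cases hjb : q ≤ i₀ + 3 * r
    · exact hshort hpq le_rfl le_rfl (by omega) (by rwa [min_eq_left hjb] at hw) huw
    rw [min_eq_right (by omega)] at hw
    obtain ⟨i, hpi, hiq, hwi⟩ := ih _ (by omega) (by omega) (by omega) rfl w hw
    have := hnear i hiq w huw hwi
    omega

theorem exists_mem_path_dist_getVert_le (hH : H.Connected) {σ : H.Walk a b}
    (hσ : σ.length = H.dist a b) {i : ℕ} (hi : i ≤ σ.length) :
    ∃ w ∈ P.path a b, H.dist (σ.getVert i) w ≤ 2 * (M + 10 * D + 1) ^ 2 := by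
  have hstep : (P.path a b).IsChain fun u v => H.dist a v ≤ H.dist a u + 1 :=
    (P.isChain_path a b).imp fun u v huv => by
      have := hH.dist_triangle (u := a) (v := u) (w := v)
      omega
  obtain ⟨w, hw, haw⟩ := List.exists_mem_eq_of_isChain hstep (P.head?_path a b)
    (P.getLast?_path a b) (by simp) (hσ ▸ hi)
  obtain ⟨j, -, hj, hwj⟩ := P.exists_dist_getVert_le hH hσ (Nat.zero_le _) le_rfl w (by simpa)
  have haj := hH.dist_getVert_of_length_eq_dist hσ (Nat.zero_le j) hj
  simp only [Walk.getVert_zero, Nat.sub_zero] at haj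
  have := hH.dist_triangle (u := a) (v := w) (w := σ.getVert j)
  have := hH.dist_triangle (u := a) (v := σ.getVert j) (w := w)
  have := hH.dist_triangle (u := σ.getVert i) (v := σ.getVert j) (w := w)
  have : H.dist (σ.getVert j) w = H.dist w (σ.getVert j) := dist_comm
  have : H.dist (σ.getVert i) (σ.getVert j) = H.dist (σ.getVert j) (σ.getVert i) := dist_comm
  refine ⟨w, hw, ?_⟩
  rcases le_total i j with h | h
  · have := σ.dist_getVert_le h
    omega
  · have := σ.dist_getVert_le h
    omega

theorem thinTriangles (P : ThinPathSystem H M D) (hH : H.Connected) :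
    H.ThinTriangles (3 * (M + 10 * D + 1) ^ 2 + D) := by
  intro x y z p q r hp hq hr u hu
  obtain ⟨i, rfl, hi⟩ := Walk.mem_support_iff_exists_getVert.1 hu
  obtain ⟨w, hw, huw⟩ := P.exists_mem_path_dist_getVert_le hH hr hi
  obtain ⟨v, hv, hwv⟩ := P.exists_dist_le (b := y) hw
  obtain ⟨t, ht, hvt⟩ : ∃ t, (t ∈ p.support ∨ t ∈ q.support) ∧
      H.dist v t ≤ (M + 10 * D + 1) ^ 2 := by
    rcases hv with hv | hv
    · obtain ⟨j, -, -, hj⟩ := P.exists_dist_getVert_le hH hp (Nat.zero_le _) le_rfl v (by simpa)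
      exact ⟨_, .inl (p.getVert_mem_support j), hj⟩
    · obtain ⟨j, -, -, hj⟩ := P.exists_dist_getVert_le hH hq (Nat.zero_le _) le_rfl v (by simpa)
      exact ⟨_, .inr (q.getVert_mem_support j), hj⟩
  have := hH.dist_triangle (u := r.getVert i) (v := w) (w := v)
  have := hH.dist_triangle (u := r.getVert i) (v := v) (w := t)
  exact ⟨t, ht, by omega⟩

end ThinPathSystem

variable {W : Type*} {H : SimpleGraph W}

theorem Connected.nonempty_thinPathSystem_of_map (hG : G.Connected) {E : ℕ}
    (hE : G.ThinTriangles E) {φ : V → W} (hsurj : Function.Surjective φ)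
    (hsimp : ∀ u v, G.Adj u v → H.Adj (φ u) (φ v) ∨ φ u = φ v)
    {L : ℕ} (hLip : ∀ u v, H.dist (φ u) (φ v) ≤ L * G.dist u v) {M : ℕ}
    (hM : ∀ x x' : V, H.dist (φ x) (φ x') ≤ 1 →
      ∀ p : G.Walk x x', p.length = G.dist x x' →
        ∀ a ∈ p.support, ∀ b ∈ p.support, H.dist (φ a) (φ b) ≤ M) :
    Nonempty (ThinPathSystem H M (L * E)) := by
  set s := Function.surjInv hsurj
  have hφs : ∀ a, φ (s a) = a := Function.surjInv_eq hsurj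
  choose g hg using fun a b => hG.exists_walk_length_eq_dist (s a) (s b)
  refine ⟨⟨fun a b => (g a b).support.map φ, ?_, ?_, ?_, ?_, ?_⟩⟩
  · intro a b
    rw [List.head?_map, ← (g a b).cons_tail_support, List.head?_cons, Option.map_some, hφs]
  · intro a b
    simp [List.getLast?_eq_some_getLast (Walk.support_ne_nil _), hφs]
  · intro a b
    refine List.isChain_map_of_isChain φ (fun u v huv => ?_) (g a b).isChain_adj_support
    rcases hsimp u v huv with h | h
    · exact (dist_eq_one_iff_adj.2 h).le
    · simp [h]
  · intro a b hab u hu v hv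
    simp only [List.mem_map] at hu hv
    obtain ⟨u, hu, rfl⟩ := hu
    obtain ⟨v, hv, rfl⟩ := hv
    exact hM _ _ (by rwa [hφs, hφs]) (g a b) (hg a b) u hu v hv
  · intro a b e u hu
    simp only [List.mem_map] at hu ⊢
    obtain ⟨u, hu, rfl⟩ := hu
    obtain ⟨v, hv, huv⟩ := hE (g a b) (g b e) (g a e) (hg a b) (hg b e) (hg a e) u hu
    refine ⟨φ v, hv.imp (⟨v, ·, rfl⟩) (⟨v, ·, rfl⟩), ?_⟩
    exact (hLip u v).trans (Nat.mul_le_mul_left L huv)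

end SimpleGraph

theorem stmt8_general {V W : Type*} (G : SimpleGraph V) (H : SimpleGraph W)
    (hG : G.Connected) (hH : H.Connected)
    (φ : V → W) (hsurj : Function.Surjective φ)
    (hsimp : ∀ u v, G.Adj u v → H.Adj (φ u) (φ v) ∨ φ u = φ v)
    (L : ℕ) (hLip : ∀ u v, H.dist (φ u) (φ v) ≤ L * G.dist u v)
    (hhyp : IsGromovHyperbolicGraph G)
    (M : ℕ)
    (hM : ∀ x x' : V, H.dist (φ x) (φ x') ≤ 1 →
      ∀ p : G.Walk x x', p.length = G.dist x x' →
        ∀ a ∈ p.support, ∀ b ∈ p.support, H.dist (φ a) (φ b) ≤ M) :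
    IsGromovHyperbolicGraph H := by
  obtain ⟨E, hE⟩ := hG.thinTriangles_of_isGromovHyperbolicGraph hhyp
  obtain ⟨P⟩ := hG.nonempty_thinPathSystem_of_map hE hsurj hsimp hLip hM
  exact hH.isGromovHyperbolicGraph_of_thinTriangles (P.thinTriangles hH)

/-- Kapovich--Rafi: let `φ` be a surjective simplicial Lipschitz map between
connected graphs `G` (hyperbolic) and `H` such that images under `φ` of geodesics between
vertices at `H`-distance at most `1` apart have uniformly bounded diameter `M`. Then `H`
is Gromov hyperbolic. -/
theorem stmt8 {V W : Type*} (G : SimpleGraph V) (H : SimpleGraph W)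
    (hG : G.Connected) (hH : H.Connected)
    (φ : V → W) (hsurj : Function.Surjective φ)
    (hsimp : ∀ u v, G.Adj u v → H.Adj (φ u) (φ v) ∨ φ u = φ v)
    (L : ℕ) (hLip : ∀ u v, H.dist (φ u) (φ v) ≤ L * G.dist u v)
    (hhyp : IsGromovHyperbolicGraph G)
    (M : ℕ) (hMpos : 0 < M)
    (hM : ∀ x x' : V, H.dist (φ x) (φ x') ≤ 1 →
      ∀ p : G.Walk x x', p.length = G.dist x x' →
        ∀ a ∈ p.support, ∀ b ∈ p.support, H.dist (φ a) (φ b) ≤ M) :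
    IsGromovHyperbolicGraph H :=
  stmt8_general G H hG hH φ hsurj hsimp L hLip hhyp M hM
end

section
/- Let K be a graph in which every edge is contained in only finitely many circuits of each fixed length n that are 'atomic' with respect to a decomposition, and suppose every non-atomic circuit of K is a concatenation of two strictly shorter circuits sharing an edge. If for each edge e and each n the set of atomic circuits of length at most n through e is finite, then for each edge e and each n the set of all circuits of length at most n through e is finite (i.e., K is fine). -/
/-- Abstract fineness criterion.  Suppose `C` is a type of circuits of a graph,
with length function `len`, edge sets `edges`, a class of `Atomic` circuits, and a decomposition
relation `Decomp c c₁ c₂ f` meaning that the circuit `c` is the concatenation of `c₁` and `c₂`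
along the shared edge `f`.  Assume:
* for every edge `e` and bound `n`, only finitely many atomic circuits of length at most `n`
  contain `e`;
* every non-atomic circuit `c` containing an edge `e` decomposes as a concatenation of two
  circuits `c₁, c₂` along some shared edge, with `e` an edge of `c₁`;
* in any decomposition both pieces are strictly shorter, share the gluing edge, and every edge
  of `c` is an edge of one of the pieces;
* any pair of circuits and shared edge has only finitely many concatenations.
Then for every edge `e` and every `n`, only finitely many circuits of length at most `n`
contain `e`; i.e. the graph is fine. -/
theorem stmt9 {C E : Type*} (len : C → ℕ) (edges : C → Finset E)
    (Atomic : C → Prop) (Decomp : C → C → C → E → Prop)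
    (hatom : ∀ (e : E) (n : ℕ), {c | Atomic c ∧ len c ≤ n ∧ e ∈ edges c}.Finite)
    (hdec : ∀ c, ¬ Atomic c → ∀ e ∈ edges c, ∃ c₁ c₂ f, Decomp c c₁ c₂ f ∧ e ∈ edges c₁)
    (hprop : ∀ c c₁ c₂ f, Decomp c c₁ c₂ f →
      len c₁ < len c ∧ len c₂ < len c ∧ f ∈ edges c₁ ∧ f ∈ edges c₂ ∧
        ∀ e ∈ edges c, e ∈ edges c₁ ∨ e ∈ edges c₂)
    (hfin : ∀ c₁ c₂ f, {c | Decomp c c₁ c₂ f}.Finite) :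
    ∀ (e : E) (n : ℕ), {c | len c ≤ n ∧ e ∈ edges c}.Finite := by
  intro e n
  induction n generalizing e with
  | zero =>
    refine (hatom e 0).subset fun c ⟨hl, he⟩ => ⟨?_, hl, he⟩
    by_contra hA
    obtain ⟨c₁, c₂, f, hD, _⟩ := hdec c hA e he
    have := (hprop c c₁ c₂ f hD).1
    omega
  | succ n ih =>
    have hfin2 : ({c | Atomic c ∧ len c ≤ n + 1 ∧ e ∈ edges c} ∪
        ⋃ c₁ ∈ {c | len c ≤ n ∧ e ∈ edges c}, ⋃ f ∈ edges c₁,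
          ⋃ c₂ ∈ {c | len c ≤ n ∧ f ∈ edges c}, {c | Decomp c c₁ c₂ f}).Finite := by
      refine (hatom e (n + 1)).union ((ih e).biUnion fun c₁ _ =>
        Set.Finite.biUnion (edges c₁).finite_toSet fun f _ =>
        (ih f).biUnion fun c₂ _ => hfin c₁ c₂ f)
    refine hfin2.subset fun c ⟨hl, he⟩ => ?_
    by_cases hA : Atomic c
    · exact Or.inl ⟨hA, hl, he⟩
    · obtain ⟨c₁, c₂, f, hD, he1⟩ := hdec c hA e he
      obtain ⟨h1, h2, hf1, hf2, -⟩ := hprop c c₁ c₂ f hD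
      refine Or.inr ?_
      simp only [Set.mem_iUnion, Set.mem_setOf_eq]
      exact ⟨c₁, ⟨by omega, he1⟩, f, hf1, c₂, ⟨by omega, hf2⟩, hD⟩
end

section
/- Let 𝒳 be a tree of metrizable spaces over a tree T with nonempty compact metrizable edge spaces and a compatible family of metrics 𝒟 (so each edge space embeds isometrically into its two adjacent vertex spaces). Define the quotient pseudometric d_∼ on the disjoint union of vertex spaces via infima over linking chains. Then for any two points x, y in distinct vertex spaces, the infimum d_∼(x,y) is attained by an efficient linking chain (one whose chain of vertex spaces follows the geodesic in T), and d_∼ descends to a genuine metric on the quotient space X_T = X_⊔/∼. -/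
section TreeOfSpaces

open scoped Classical

variable {T : Type*} (X : T → Type*) [∀ v, MetricSpace (X v)]

/-- The distance within a common vertex space between two points of the disjoint union
`⊔_v X_v` (and `0` for points of different vertex spaces; linking chains only use pairs in a
common vertex space). -/
noncomputable def fiberDist (a b : Σ v, X v) : ℝ :=
  if h : a.1 = b.1 then dist (h ▸ a.2) b.2 else 0

/-- The length `d_⊔(α)` of a linking chain, given as a list of pairs `(p_i, q_i)`. -/
noncomputable def chainLength (c : List ((Σ v, X v) × (Σ v, X v))) : ℝ :=
  (c.map fun pr => fiberDist X pr.1 pr.2).sum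

/-- `c` is a linking chain from `x` to `y`: a nonempty list of pairs `(p_i, q_i)`, each pair in
a common vertex space, starting at `x`, ending at `y`, with `q_i ∼ p_{i+1}` (where `R` is the
gluing equivalence relation). -/
def IsLinkingChain (R : (Σ v, X v) → (Σ v, X v) → Prop)
    (c : List ((Σ v, X v) × (Σ v, X v))) (x y : Σ v, X v) : Prop :=
  ∃ hne : c ≠ [], (c.head hne).1 = x ∧ (c.getLast hne).2 = y ∧
    (∀ pr ∈ c, pr.1.1 = pr.2.1) ∧ c.Chain' (fun pr pr' => R pr.2 pr'.1)

/-- The quotient pseudometric `d_∼`: the infimum of lengths of linking chains. -/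
noncomputable def quotDist (R : (Σ v, X v) → (Σ v, X v) → Prop) (x y : Σ v, X v) : ℝ :=
  sInf {L : ℝ | ∃ c, IsLinkingChain X R c x y ∧ chainLength X c = L}

/-- A linking chain is efficient if its sequence of vertex spaces traces out the geodesic
(the unique embedded path) in the tree `G` between the vertex spaces of its endpoints. -/
def IsEfficientChain (G : SimpleGraph T)
    (c : List ((Σ v, X v) × (Σ v, X v))) (x y : Σ v, X v) : Prop :=
  ∃ w : G.Walk x.1 y.1, w.IsPath ∧ c.map (fun pr => pr.1.1) = w.support

end TreeOfSpaces


/-! Let `treeDist x y` be the least length of a linking chain from `x` to `y` whose vertex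
spaces follow the geodesic of the tree. Since the edge spaces are compact, the infimum over the
crossing points of each edge is attained, so `treeDist` is realised by an efficient chain.
A walk that is not the geodesic must cross some edge and come straight back; as both copies of
an edge space are isometric, cutting out this backtrack does not increase the cost. Hence the
geodesic is the cheapest walk, `treeDist` satisfies the triangle inequality, and it vanishes on
glued points, so it is bounded by the length of every linking chain: `d_∼ = treeDist`.
Finally, a minimising chain of length `0` only jumps between glued points, so `d_∼(x, y) = 0`
forces `x ∼ y`. -/

open SimpleGraph (Walk)

section WalkCost

variable {T : Type*} {G : SimpleGraph T} {X : T → Type*} [∀ v, MetricSpace (X v)]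
  {Espace : G.edgeSet → Type*}
  (ψ : ∀ (e : G.edgeSet) (v : T), v ∈ (e : Sym2 T) → Espace e → X v)

/-- The least length of a linking chain from `x` to `y` whose vertex spaces follow the walk `w`:
each edge of `w` is crossed through a point of its edge space. -/
noncomputable def walkCost : ∀ {u v : T}, G.Walk u v → X u → X v → ℝ
  | _, _, .nil, x, y => dist x y
  | _, _, @Walk.cons _ _ u m _ h p, x, y =>
      ⨅ z : Espace ⟨s(u, m), h⟩,
        dist x (ψ ⟨s(u, m), h⟩ u (Sym2.mem_mk_left u m) z) +
          walkCost p (ψ ⟨s(u, m), h⟩ m (Sym2.mem_mk_right u m) z) y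

theorem walkCost_nil {u : T} (x y : X u) :
    walkCost ψ (Walk.nil : G.Walk u u) x y = dist x y := rfl

/-- The edge may be presented as any `e` containing both endpoints, which avoids transport along
`s(u, m) = s(m, u)` when a walk crosses an edge backwards. -/
theorem walkCost_cons {u m v : T} (h : G.Adj u m) (p : G.Walk m v) (e : G.edgeSet)
    (hu : u ∈ (e : Sym2 T)) (hm : m ∈ (e : Sym2 T)) (x : X u) (y : X v) :
    walkCost ψ (Walk.cons h p) x y =
      ⨅ z : Espace e, dist x (ψ e u hu z) + walkCost ψ p (ψ e m hm z) y := by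
  obtain rfl : e = ⟨s(u, m), h⟩ := Subtype.ext ((Sym2.mem_and_mem_iff h.ne).1 ⟨hu, hm⟩)
  rfl

variable [∀ e, Nonempty (Espace e)]

theorem walkCost_nonneg : ∀ {u v : T} (w : G.Walk u v) (x : X u) (y : X v),
    0 ≤ walkCost ψ w x y
  | _, _, .nil, _, _ => dist_nonneg
  | _, _, .cons _ p, _, y =>
      le_ciInf fun _ => add_nonneg dist_nonneg (walkCost_nonneg p _ y)

theorem bddBelow_range_walkCost_cons {u m v : T} (p : G.Walk m v) (e : G.edgeSet)
    (hu : u ∈ (e : Sym2 T)) (hm : m ∈ (e : Sym2 T)) (x : X u) (y : X v) :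
    BddBelow (Set.range fun z : Espace e => dist x (ψ e u hu z) + walkCost ψ p (ψ e m hm z) y) :=
  ⟨0, by rintro _ ⟨z, rfl⟩; exact add_nonneg dist_nonneg (walkCost_nonneg ψ p _ y)⟩

theorem walkCost_cons_le {u m v : T} (h : G.Adj u m) (p : G.Walk m v) (e : G.edgeSet)
    (hu : u ∈ (e : Sym2 T)) (hm : m ∈ (e : Sym2 T)) (x : X u) (y : X v) (z : Espace e) :
    walkCost ψ (Walk.cons h p) x y ≤
      dist x (ψ e u hu z) + walkCost ψ p (ψ e m hm z) y := by
  rw [walkCost_cons ψ h p e hu hm]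
  exact ciInf_le (bddBelow_range_walkCost_cons ψ p e hu hm x y) z

theorem le_walkCost_cons_iff {u m v : T} (h : G.Adj u m) (p : G.Walk m v) (e : G.edgeSet)
    (hu : u ∈ (e : Sym2 T)) (hm : m ∈ (e : Sym2 T)) (x : X u) (y : X v) {c : ℝ} :
    c ≤ walkCost ψ (Walk.cons h p) x y ↔
      ∀ z : Espace e, c ≤ dist x (ψ e u hu z) + walkCost ψ p (ψ e m hm z) y := by
  rw [walkCost_cons ψ h p e hu hm]
  exact le_ciInf_iff (bddBelow_range_walkCost_cons ψ p e hu hm x y)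

theorem walkCost_le_dist_add : ∀ {u v : T} (w : G.Walk u v) (x x' : X u) (y : X v),
    walkCost ψ w x y ≤ dist x x' + walkCost ψ w x' y
  | _, _, .nil, x, x', y => dist_triangle x x' y
  | _, _, @Walk.cons _ _ u m _ h p, x, x', y => by
      rw [← sub_le_iff_le_add', le_walkCost_cons_iff ψ h p ⟨s(u, m), h⟩ (Sym2.mem_mk_left u m)
        (Sym2.mem_mk_right u m)]
      intro z
      have := walkCost_cons_le ψ h p ⟨s(u, m), h⟩ (Sym2.mem_mk_left u m)
        (Sym2.mem_mk_right u m) x y z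
      linarith [dist_triangle x x' (ψ ⟨s(u, m), h⟩ u (Sym2.mem_mk_left u m) z)]

theorem lipschitzWith_walkCost {u v : T} (w : G.Walk u v) (y : X v) :
    LipschitzWith 1 fun x => walkCost ψ w x y :=
  LipschitzWith.of_le_add fun x x' => by
    linarith [walkCost_le_dist_add ψ w x x' y]

theorem walkCost_append_le : ∀ {u v w : T} (p : G.Walk u v) (q : G.Walk v w)
    (x : X u) (y : X v) (z : X w),
    walkCost ψ (p.append q) x z ≤ walkCost ψ p x y + walkCost ψ q y z
  | _, _, _, .nil, q, x, y, z => walkCost_le_dist_add ψ q x y z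
  | _, _, _, @Walk.cons _ _ u m _ h p, q, x, y, z => by
      rw [Walk.cons_append, ← sub_le_iff_le_add,
        le_walkCost_cons_iff ψ h p ⟨s(u, m), h⟩ (Sym2.mem_mk_left u m) (Sym2.mem_mk_right u m)]
      intro z'
      have := walkCost_cons_le ψ h (p.append q) ⟨s(u, m), h⟩ (Sym2.mem_mk_left u m)
        (Sym2.mem_mk_right u m) x z z'
      linarith [walkCost_append_le p q (ψ ⟨s(u, m), h⟩ m (Sym2.mem_mk_right u m) z') y z]

theorem walkCost_reverse_le : ∀ {u v : T} (w : G.Walk u v) (x : X u) (y : X v),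
    walkCost ψ w.reverse y x ≤ walkCost ψ w x y
  | _, _, .nil, x, y => (dist_comm y x).le
  | _, _, @Walk.cons _ _ u m _ h p, x, y => by
      rw [le_walkCost_cons_iff ψ h p ⟨s(u, m), h⟩ (Sym2.mem_mk_left u m) (Sym2.mem_mk_right u m),
        Walk.reverse_cons]
      intro z
      set a := ψ ⟨s(u, m), h⟩ u (Sym2.mem_mk_left u m) z
      set b := ψ ⟨s(u, m), h⟩ m (Sym2.mem_mk_right u m) z
      calc walkCost ψ (p.reverse.append (.cons h.symm .nil)) y x
          ≤ walkCost ψ p.reverse y b + walkCost ψ (.cons h.symm .nil) b x :=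
            walkCost_append_le ψ _ _ y b x
        _ ≤ walkCost ψ p b y + (dist b b + dist a x) := by
            gcongr
            · exact walkCost_reverse_le p b y
            · exact walkCost_cons_le ψ h.symm .nil ⟨s(u, m), h⟩ (Sym2.mem_mk_right u m)
                (Sym2.mem_mk_left u m) b x z
        _ = dist x a + walkCost ψ p b y := by rw [dist_self, dist_comm]; ring

end WalkCost

section LinkingChains

variable {T : Type*} {X : T → Type*} {R : (Σ v, X v) → (Σ v, X v) → Prop}

theorem isLinkingChain_singleton_iff {pr : (Σ v, X v) × (Σ v, X v)} {x y : Σ v, X v} :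
    IsLinkingChain X R [pr] x y ↔ pr.1 = x ∧ pr.2 = y ∧ pr.1.1 = pr.2.1 := by
  simp [IsLinkingChain, List.Chain']

theorem isLinkingChain_cons_cons_iff {pr pr' : (Σ v, X v) × (Σ v, X v)}
    {c : List ((Σ v, X v) × (Σ v, X v))} {x y : Σ v, X v} :
    IsLinkingChain X R (pr :: pr' :: c) x y ↔
      pr.1 = x ∧ pr.1.1 = pr.2.1 ∧ R pr.2 pr'.1 ∧ IsLinkingChain X R (pr' :: c) pr'.1 y := by
  simp [IsLinkingChain, List.Chain', List.isChain_cons_cons]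
  tauto

theorem IsLinkingChain.cons {pr : (Σ v, X v) × (Σ v, X v)} {c : List ((Σ v, X v) × (Σ v, X v))}
    {a y : Σ v, X v} (hpr : pr.1.1 = pr.2.1) (hR : R pr.2 a) (hc : IsLinkingChain X R c a y) :
    IsLinkingChain X R (pr :: c) pr.1 y := by
  cases c with
  | nil => exact absurd rfl hc.1
  | cons pr' c =>
    obtain rfl : pr'.1 = a := hc.2.1
    exact isLinkingChain_cons_cons_iff.2 ⟨rfl, hpr, hR, hc⟩

end LinkingChains

section ChainLength

variable {T : Type*} {X : T → Type*} [∀ v, MetricSpace (X v)]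
  {R : (Σ v, X v) → (Σ v, X v) → Prop}

theorem fiberDist_mk {v : T} (p q : X v) : fiberDist X ⟨v, p⟩ ⟨v, q⟩ = dist p q := by
  simp [fiberDist]

theorem fiberDist_nonneg (a b : Σ v, X v) : 0 ≤ fiberDist X a b := by
  unfold fiberDist
  split_ifs
  exacts [dist_nonneg, le_rfl]

theorem eq_of_fiberDist_eq_zero {a b : Σ v, X v} (hab : a.1 = b.1)
    (h : fiberDist X a b = 0) : a = b := by
  obtain ⟨v, p⟩ := a
  obtain ⟨w, q⟩ := b
  obtain rfl : v = w := hab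
  rw [fiberDist_mk, dist_eq_zero] at h
  rw [h]

theorem chainLength_cons (pr : (Σ v, X v) × (Σ v, X v)) (c : List ((Σ v, X v) × (Σ v, X v))) :
    chainLength X (pr :: c) = fiberDist X pr.1 pr.2 + chainLength X c :=
  List.sum_cons

theorem chainLength_nonneg (c : List ((Σ v, X v) × (Σ v, X v))) : 0 ≤ chainLength X c :=
  List.sum_nonneg fun _ ha => by
    obtain ⟨pr, -, rfl⟩ := List.mem_map.1 ha
    exact fiberDist_nonneg pr.1 pr.2

theorem IsLinkingChain.rel_of_chainLength_eq_zero (hR : Equivalence R) :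
    ∀ {c : List ((Σ v, X v) × (Σ v, X v))} {x y : Σ v, X v},
      IsLinkingChain X R c x y → chainLength X c = 0 → R x y
  | [], _, _, hc, _ => absurd rfl hc.1
  | [pr], _, _, hc, h0 => by
    obtain ⟨rfl, rfl, hfib⟩ := isLinkingChain_singleton_iff.1 hc
    rw [chainLength_cons, chainLength, List.map_nil, List.sum_nil, add_zero] at h0
    rw [eq_of_fiberDist_eq_zero hfib h0]
    exact hR.refl _
  | pr :: pr' :: c, _, _, hc, h0 => by
    obtain ⟨rfl, hfib, hlink, hc'⟩ := isLinkingChain_cons_cons_iff.1 hc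
    rw [chainLength_cons] at h0
    have h1 := fiberDist_nonneg pr.1 pr.2
    have h2 := chainLength_nonneg (X := X) (pr' :: c)
    rw [eq_of_fiberDist_eq_zero hfib (by linarith)]
    exact hR.trans hlink (hc'.rel_of_chainLength_eq_zero hR (by linarith))

end ChainLength

section Attainment

variable {T : Type*} {G : SimpleGraph T} {X : T → Type*} [∀ v, MetricSpace (X v)]
  {Espace : G.edgeSet → Type*} [∀ e, TopologicalSpace (Espace e)] [∀ e, CompactSpace (Espace e)]
  [∀ e, Nonempty (Espace e)]
  {ψ : ∀ (e : G.edgeSet) (v : T), v ∈ (e : Sym2 T) → Espace e → X v}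
  {R : (Σ v, X v) → (Σ v, X v) → Prop}

theorem exists_walkCost_cons_eq (hψ : ∀ e v hv, Continuous (ψ e v hv)) {u m v : T}
    (h : G.Adj u m) (p : G.Walk m v) (x : X u) (y : X v) :
    ∃ z : Espace ⟨s(u, m), h⟩, walkCost ψ (.cons h p) x y =
      dist x (ψ ⟨s(u, m), h⟩ u (Sym2.mem_mk_left u m) z) +
        walkCost ψ p (ψ ⟨s(u, m), h⟩ m (Sym2.mem_mk_right u m) z) y := by
  have hcont : Continuous fun z : Espace ⟨s(u, m), h⟩ =>
      dist x (ψ ⟨s(u, m), h⟩ u (Sym2.mem_mk_left u m) z) +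
        walkCost ψ p (ψ ⟨s(u, m), h⟩ m (Sym2.mem_mk_right u m) z) y :=
    (continuous_const.dist (hψ _ _ _)).add
      ((lipschitzWith_walkCost ψ p y).continuous.comp (hψ _ _ _))
  obtain ⟨z, hz⟩ := hcont.exists_forall_le (by simp)
  exact ⟨z, le_antisymm (walkCost_cons_le ψ h p _ _ _ x y z)
    ((le_walkCost_cons_iff ψ h p _ _ _ x y).2 hz)⟩

theorem exists_isLinkingChain_walkCost (hψ : ∀ e v hv, Continuous (ψ e v hv))
    (hR : ∀ e a b ha hb z, R ⟨a, ψ e a ha z⟩ ⟨b, ψ e b hb z⟩) :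
    ∀ {u v : T} (w : G.Walk u v) (x : X u) (y : X v),
      ∃ c, IsLinkingChain X R c ⟨u, x⟩ ⟨v, y⟩ ∧ c.map (fun pr => pr.1.1) = w.support ∧
        chainLength X c = walkCost ψ w x y
  | _, _, .nil, x, y => ⟨[(⟨_, x⟩, ⟨_, y⟩)], isLinkingChain_singleton_iff.2 ⟨rfl, rfl, rfl⟩, rfl,
      by simp [chainLength, fiberDist_mk, walkCost_nil]⟩
  | _, _, @Walk.cons _ _ u m _ h p, x, y => by
    obtain ⟨z, hz⟩ := exists_walkCost_cons_eq hψ h p x y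
    obtain ⟨c, hc, hsupp, hlen⟩ := exists_isLinkingChain_walkCost hψ hR p
      (ψ ⟨s(u, m), h⟩ m (Sym2.mem_mk_right u m) z) y
    refine ⟨(⟨u, x⟩, ⟨u, ψ ⟨s(u, m), h⟩ u (Sym2.mem_mk_left u m) z⟩) :: c,
      hc.cons rfl (hR _ _ _ _ _ z), by simp [hsupp], ?_⟩
    rw [chainLength_cons, hlen, fiberDist_mk, hz]

end Attainment

namespace SimpleGraph.IsTree

variable {T : Type*} {G : SimpleGraph T} (hT : G.IsTree)

noncomputable def path (u v : T) : G.Walk u v :=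
  (hT.existsUnique_path u v).choose

theorem isPath_path (u v : T) : (hT.path u v).IsPath :=
  (hT.existsUnique_path u v).choose_spec.1

theorem eq_path {u v : T} {p : G.Walk u v} (hp : p.IsPath) : p = hT.path u v :=
  (hT.existsUnique_path u v).choose_spec.2 p hp

theorem path_self (u : T) : hT.path u u = .nil :=
  (hT.eq_path .nil).symm

theorem reverse_path (u v : T) : (hT.path u v).reverse = hT.path v u :=
  hT.eq_path (hT.isPath_path u v).reverse

theorem path_eq_cons_of_notMem {u m v : T} (h : G.Adj u m) (hu : u ∉ (hT.path m v).support) :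
    hT.path u v = .cons h (hT.path m v) :=
  (hT.eq_path ((hT.isPath_path m v).cons hu)).symm

theorem path_eq_cons_of_mem {u m v : T} (h : G.Adj u m) (hu : u ∈ (hT.path m v).support) :
    hT.path m v = .cons h.symm (hT.path u v) := by
  classical
  have htake : (hT.path m v).takeUntil u hu = .cons h.symm .nil := by
    rw [hT.eq_path ((hT.isPath_path m v).takeUntil hu),
      hT.eq_path (p := .cons h.symm .nil) (by simp [h.ne'])]
  have hdrop : (hT.path m v).dropUntil u hu = hT.path u v :=
    hT.eq_path ((hT.isPath_path m v).dropUntil hu)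
  conv_lhs => rw [← Walk.take_spec (hT.path m v) hu, htake, hdrop]
  rfl

end SimpleGraph.IsTree

section Geodesic

variable {T : Type*} {G : SimpleGraph T} {X : T → Type*} [∀ v, MetricSpace (X v)]
  {Espace : G.edgeSet → Type*} [∀ e, MetricSpace (Espace e)] [∀ e, Nonempty (Espace e)]
  {ψ : ∀ (e : G.edgeSet) (v : T), v ∈ (e : Sym2 T) → Espace e → X v}

/-- Crossing an edge and immediately crossing back costs at least as much as staying put,
because both sides of an edge space carry the same metric. -/
theorem walkCost_le_walkCost_cons_backtrack (hψ : ∀ e v hv, Isometry (ψ e v hv))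
    {u m v : T} (h : G.Adj m u) (p : G.Walk u v) (e : G.edgeSet)
    (hu : u ∈ (e : Sym2 T)) (hm : m ∈ (e : Sym2 T)) (z : Espace e) (x : X u) (y : X v) :
    walkCost ψ p x y ≤ dist x (ψ e u hu z) + walkCost ψ (.cons h p) (ψ e m hm z) y := by
  rw [← sub_le_iff_le_add', le_walkCost_cons_iff ψ h p e hm hu]
  intro z'
  rw [sub_le_iff_le_add']
  calc walkCost ψ p x y
      ≤ dist x (ψ e u hu z') + walkCost ψ p (ψ e u hu z') y := walkCost_le_dist_add ψ p _ _ y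
    _ ≤ dist x (ψ e u hu z) + dist (ψ e u hu z) (ψ e u hu z') +
          walkCost ψ p (ψ e u hu z') y := by gcongr; exact dist_triangle _ _ _
    _ = dist x (ψ e u hu z) + (dist (ψ e m hm z) (ψ e m hm z') +
          walkCost ψ p (ψ e u hu z') y) := by
        rw [(hψ e u hu).dist_eq, (hψ e m hm).dist_eq, add_assoc]

theorem walkCost_path_le_cons (hψ : ∀ e v hv, Isometry (ψ e v hv)) (hT : G.IsTree)
    {u m v : T} (h : G.Adj u m) (z : Espace ⟨s(u, m), h⟩) (x : X u) (y : X v) :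
    walkCost ψ (hT.path u v) x y ≤
      dist x (ψ ⟨s(u, m), h⟩ u (Sym2.mem_mk_left u m) z) +
        walkCost ψ (hT.path m v) (ψ ⟨s(u, m), h⟩ m (Sym2.mem_mk_right u m) z) y := by
  by_cases hu : u ∈ (hT.path m v).support
  · rw [hT.path_eq_cons_of_mem h hu]
    exact walkCost_le_walkCost_cons_backtrack hψ h.symm _ _ _ _ z x y
  · rw [hT.path_eq_cons_of_notMem h hu]
    exact walkCost_cons_le ψ h _ _ _ _ x y z

theorem walkCost_path_le (hψ : ∀ e v hv, Isometry (ψ e v hv)) (hT : G.IsTree) :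
    ∀ {u v : T} (w : G.Walk u v) (x : X u) (y : X v),
      walkCost ψ (hT.path u v) x y ≤ walkCost ψ w x y
  | _, _, .nil, x, y => by rw [hT.path_self]
  | _, _, @Walk.cons _ _ u m _ h p, x, y =>
      (le_walkCost_cons_iff ψ h p ⟨s(u, m), h⟩ _ _ x y).2 fun z =>
        (walkCost_path_le_cons hψ hT h z x y).trans
          (add_le_add_right (walkCost_path_le hψ hT p _ y) _)

end Geodesic

section TreeDist

variable {T : Type*} {G : SimpleGraph T} {X : T → Type*} [∀ v, MetricSpace (X v)]
  {Espace : G.edgeSet → Type*}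
  {ψ : ∀ (e : G.edgeSet) (v : T), v ∈ (e : Sym2 T) → Espace e → X v}
  {R : (Σ v, X v) → (Σ v, X v) → Prop}

variable (ψ) in
noncomputable def treeDist (hT : G.IsTree) (x y : Σ v, X v) : ℝ :=
  walkCost ψ (hT.path x.1 y.1) x.2 y.2

variable (hT : G.IsTree)

theorem treeDist_eq_fiberDist {a b : Σ v, X v} (hab : a.1 = b.1) :
    treeDist ψ hT a b = fiberDist X a b := by
  obtain ⟨v, p⟩ := a
  obtain ⟨w, q⟩ := b
  obtain rfl : v = w := hab
  rw [treeDist, fiberDist_mk, hT.path_self, walkCost_nil]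

variable [∀ e, Nonempty (Espace e)]

theorem treeDist_nonneg (x y : Σ v, X v) : 0 ≤ treeDist ψ hT x y :=
  walkCost_nonneg ψ _ _ _

theorem treeDist_comm (x y : Σ v, X v) : treeDist ψ hT x y = treeDist ψ hT y x := by
  have key (a b : Σ v, X v) : treeDist ψ hT b a ≤ treeDist ψ hT a b := by
    rw [treeDist, ← hT.reverse_path]
    exact walkCost_reverse_le ψ _ _ _
  exact le_antisymm (key y x) (key x y)

variable [∀ e, MetricSpace (Espace e)]

theorem treeDist_triangle (hψ : ∀ e v hv, Isometry (ψ e v hv)) (x y z : Σ v, X v) :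
    treeDist ψ hT x z ≤ treeDist ψ hT x y + treeDist ψ hT y z :=
  (walkCost_path_le hψ hT _ x.2 z.2).trans (walkCost_append_le ψ _ _ x.2 y.2 z.2)

theorem treeDist_glue (hψ : ∀ e v hv, Isometry (ψ e v hv)) (e : G.edgeSet) (v v' : T)
    (hv : v ∈ (e : Sym2 T)) (hv' : v' ∈ (e : Sym2 T)) (z : Espace e) :
    treeDist ψ hT ⟨v, ψ e v hv z⟩ ⟨v', ψ e v' hv' z⟩ = 0 := by
  refine le_antisymm ?_ (treeDist_nonneg hT _ _)
  by_cases hvv : v = v'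
  · subst hvv
    rw [treeDist_eq_fiberDist hT rfl, fiberDist_mk, dist_self]
  · have hadj : G.Adj v v' := by
      rw [← SimpleGraph.mem_edgeSet, ← (Sym2.mem_and_mem_iff hvv).1 ⟨hv, hv'⟩]
      exact e.2
    calc treeDist ψ hT ⟨v, ψ e v hv z⟩ ⟨v', ψ e v' hv' z⟩
        ≤ walkCost ψ (.cons hadj .nil) (ψ e v hv z) (ψ e v' hv' z) :=
          walkCost_path_le hψ hT _ _ _
      _ ≤ dist (ψ e v hv z) (ψ e v hv z) + dist (ψ e v' hv' z) (ψ e v' hv' z) :=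
          walkCost_cons_le ψ hadj .nil e hv hv' _ _ z
      _ = 0 := by rw [dist_self, dist_self, add_zero]

theorem treeDist_eq_zero_of_eqvGen (hψ : ∀ e v hv, Isometry (ψ e v hv))
    (hR : ∀ a b, R a b → treeDist ψ hT a b = 0)
    {x y : Σ v, X v} (h : Relation.EqvGen R x y) : treeDist ψ hT x y = 0 := by
  induction h with
  | rel a b hab => exact hR a b hab
  | refl a => rw [treeDist_eq_fiberDist hT rfl, fiberDist_mk, dist_self]
  | symm a b _ ih => rwa [treeDist_comm]
  | trans a b c _ _ ih₁ ih₂ =>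
    refine le_antisymm ?_ (treeDist_nonneg hT a c)
    linarith [treeDist_triangle hT hψ a b c]

theorem treeDist_le_chainLength (hψ : ∀ e v hv, Isometry (ψ e v hv))
    (hR : ∀ a b, R a b → treeDist ψ hT a b = 0) :
    ∀ {c : List ((Σ v, X v) × (Σ v, X v))} {x y : Σ v, X v},
      IsLinkingChain X R c x y → treeDist ψ hT x y ≤ chainLength X c
  | [], _, _, hc => absurd rfl hc.1
  | [pr], _, _, hc => by
    obtain ⟨rfl, rfl, hfib⟩ := isLinkingChain_singleton_iff.1 hc
    simp [chainLength, treeDist_eq_fiberDist hT hfib]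
  | pr :: pr' :: c, _, y, hc => by
    obtain ⟨rfl, hfib, hlink, hc'⟩ := isLinkingChain_cons_cons_iff.1 hc
    calc treeDist ψ hT pr.1 y
        ≤ treeDist ψ hT pr.1 pr.2 + (treeDist ψ hT pr.2 pr'.1 + treeDist ψ hT pr'.1 y) :=
          (treeDist_triangle hT hψ _ _ _).trans
            (add_le_add_right (treeDist_triangle hT hψ _ _ _) _)
      _ ≤ fiberDist X pr.1 pr.2 + (0 + chainLength X (pr' :: c)) := by
          rw [treeDist_eq_fiberDist hT hfib, hR _ _ hlink]
          gcongr
          exact treeDist_le_chainLength hψ hR hc'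
      _ = chainLength X (pr :: pr' :: c) := by simp only [zero_add, chainLength_cons]

theorem quotDist_eq_treeDist [∀ e, CompactSpace (Espace e)]
    (hψ : ∀ e v hv, Isometry (ψ e v hv)) (hR : ∀ a b, R a b → treeDist ψ hT a b = 0)
    (hglue : ∀ e a b ha hb z, R ⟨a, ψ e a ha z⟩ ⟨b, ψ e b hb z⟩) (x y : Σ v, X v) :
    quotDist X R x y = treeDist ψ hT x y := by
  obtain ⟨c, hc, -, hlen⟩ := exists_isLinkingChain_walkCost (fun e v hv => (hψ e v hv).continuous)
    hglue (hT.path x.1 y.1) x.2 y.2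
  have hmem : treeDist ψ hT x y ∈ {L | ∃ c, IsLinkingChain X R c x y ∧ chainLength X c = L} :=
    ⟨c, hc, hlen⟩
  refine le_antisymm (csInf_le ⟨0, ?_⟩ hmem) (le_csInf ⟨_, hmem⟩ ?_)
  · rintro _ ⟨c', -, rfl⟩
    exact chainLength_nonneg c'
  · rintro _ ⟨c', hc', rfl⟩
    exact treeDist_le_chainLength hT hψ hR hc'

end TreeDist

theorem stmt12_general {T : Type*} (G : SimpleGraph T) (hT : G.IsTree)
    (X : T → Type*) [∀ v, MetricSpace (X v)]
    (Espace : G.edgeSet → Type*) [∀ e, MetricSpace (Espace e)]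
    [∀ e, CompactSpace (Espace e)] [∀ e, Nonempty (Espace e)]
    (ψ : ∀ (e : G.edgeSet) (v : T), v ∈ (e : Sym2 T) → Espace e → X v)
    (hψ : ∀ e v hv, Isometry (ψ e v hv))
    (r : (Σ v, X v) → (Σ v, X v) → Prop)
    (hr : ∀ a b, r a b ↔ ∃ (e : G.edgeSet) (v v' : T) (hv : v ∈ (e : Sym2 T))
      (hv' : v' ∈ (e : Sym2 T)) (z : Espace e),
        a = ⟨v, ψ e v hv z⟩ ∧ b = ⟨v', ψ e v' hv' z⟩) :
    (∀ x y : Σ v, X v, x.1 ≠ y.1 →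
      ∃ c, IsLinkingChain X (Relation.EqvGen r) c x y ∧ IsEfficientChain X G c x y ∧
        chainLength X c = quotDist X (Relation.EqvGen r) x y) ∧
    (∀ x y : Σ v, X v, quotDist X (Relation.EqvGen r) x y = 0 ↔ Relation.EqvGen r x y) := by
  have hglue : ∀ e a b ha hb z, Relation.EqvGen r ⟨a, ψ e a ha z⟩ ⟨b, ψ e b hb z⟩ :=
    fun e a b ha hb z => .rel _ _ ((hr _ _).2 ⟨e, a, b, ha, hb, z, rfl, rfl⟩)
  have hzero : ∀ a b, Relation.EqvGen r a b → treeDist ψ hT a b = 0 := by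
    refine fun _ _ => treeDist_eq_zero_of_eqvGen hT hψ fun a b hab => ?_
    obtain ⟨e, v, v', hv, hv', z, rfl, rfl⟩ := (hr a b).1 hab
    exact treeDist_glue hT hψ e v v' hv hv' z
  have hdist := quotDist_eq_treeDist hT hψ hzero hglue
  have hgeod (x y : Σ v, X v) := exists_isLinkingChain_walkCost
    (fun e v hv => (hψ e v hv).continuous) hglue (hT.path x.1 y.1) x.2 y.2
  refine ⟨fun x y _ => ?_, fun x y => ⟨fun h0 => ?_, fun h => (hdist x y).trans (hzero x y h)⟩⟩
  · obtain ⟨c, hc, hsupp, hlen⟩ := hgeod x y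
    exact ⟨c, hc, ⟨_, hT.isPath_path x.1 y.1, hsupp⟩, hlen.trans (hdist x y).symm⟩
  · obtain ⟨c, hc, -, hlen⟩ := hgeod x y
    exact hc.rel_of_chainLength_eq_zero (Relation.EqvGen.is_equivalence r)
      (hlen.trans ((hdist x y).symm.trans h0))

/-- Let `𝒳` be a tree of metrizable spaces over a tree `G` with nonempty compact
metrizable edge spaces and a compatible family of metrics (each edge space `Espace e` embeds
isometrically via `ψ` into its adjacent vertex spaces).  Let `r` be the gluing relation
generated by identifying the two images of each edge-space point, and `d_∼ = quotDist` the
quotient pseudometric defined via linking chains.  Then for points `x, y` in distinct vertex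
spaces the infimum is attained by an efficient linking chain, and `d_∼` vanishes exactly on
the gluing equivalence relation, i.e. it descends to a genuine metric on `X_T = X_⊔/∼`. -/
theorem stmt12 {T : Type*} (G : SimpleGraph T) (hT : G.IsTree)
    (X : T → Type*) [∀ v, MetricSpace (X v)] [∀ v, Nonempty (X v)]
    (Espace : G.edgeSet → Type*) [∀ e, MetricSpace (Espace e)]
    [∀ e, CompactSpace (Espace e)] [∀ e, Nonempty (Espace e)]
    (ψ : ∀ (e : G.edgeSet) (v : T), v ∈ (e : Sym2 T) → Espace e → X v)
    (hψ : ∀ e v hv, Isometry (ψ e v hv))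
    (r : (Σ v, X v) → (Σ v, X v) → Prop)
    (hr : ∀ a b, r a b ↔ ∃ (e : G.edgeSet) (v v' : T) (hv : v ∈ (e : Sym2 T))
      (hv' : v' ∈ (e : Sym2 T)) (z : Espace e),
        a = ⟨v, ψ e v hv z⟩ ∧ b = ⟨v', ψ e v' hv' z⟩) :
    (∀ x y : Σ v, X v, x.1 ≠ y.1 →
      ∃ c, IsLinkingChain X (Relation.EqvGen r) c x y ∧ IsEfficientChain X G c x y ∧
        chainLength X c = quotDist X (Relation.EqvGen r) x y) ∧
    (∀ x y : Σ v, X v, quotDist X (Relation.EqvGen r) x y = 0 ↔ Relation.EqvGen r x y) :=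
  stmt12_general G hT X Espace ψ hψ r hr
end

section
/- Let Θ be a tree system of cut pairs over tree T with compatible shrinking metrics (with respect to a base vertex v₀), and let (M_T, d) be the total space with the quotient metric. Then every associated sequence for an end x ∈ ∂T is Cauchy in (M_T, d), and any two associated sequences (p_n), (p'_n) for the same end x satisfy d(p_n, p'_n) → 0. -/
section TreeSystem

open scoped Classical

variable {U : Type*} (M : U → Type*)

noncomputable def fiberDistM (m : ∀ u, MetricSpace (M u)) (a b : Σ u, M u) : ℝ :=
  letI := m b.1
  if h : a.1 = b.1 then dist (h ▸ a.2) b.2 else 0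

noncomputable def chainLengthM (m : ∀ u, MetricSpace (M u))
    (c : List ((Σ u, M u) × (Σ u, M u))) : ℝ :=
  (c.map fun pr => fiberDistM M m pr.1 pr.2).sum

def IsLinkingChainM (R : (Σ u, M u) → (Σ u, M u) → Prop)
    (c : List ((Σ u, M u) × (Σ u, M u))) (x y : Σ u, M u) : Prop :=
  ∃ hne : c ≠ [], (c.head hne).1 = x ∧ (c.getLast hne).2 = y ∧
    (∀ pr ∈ c, pr.1.1 = pr.2.1) ∧ c.Chain' (fun pr pr' => R pr.2 pr'.1)

noncomputable def quotDistM (m : ∀ u, MetricSpace (M u))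
    (R : (Σ u, M u) → (Σ u, M u) → Prop) (x y : Σ u, M u) : ℝ :=
  sInf {L : ℝ | ∃ c, IsLinkingChainM M R c x y ∧ chainLengthM M m c = L}

def cutRel (G : SimpleGraph U) (Vset Wset : Set U)
    (ie : ∀ v w : U, M w → M v) (a b : Σ u, M u) : Prop :=
  ∃ (v w : U) (x : M w), v ∈ Vset ∧ w ∈ Wset ∧ G.Adj v w ∧
    a = ⟨w, x⟩ ∧ b = ⟨v, ie v w x⟩

/-- A ray `(v₁, w₁, v₂, w₂, …)` in the bipartite tree `G`, starting in `Vset` and alternating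
between the two colors. -/
def IsAlternatingRay (G : SimpleGraph U) (Vset Wset : Set U) (r : ℕ → U) : Prop :=
  (∀ n, G.Adj (r n) (r (n + 1))) ∧ Function.Injective r ∧
    (∀ n, r (2 * n) ∈ Vset) ∧ ∀ n, r (2 * n + 1) ∈ Wset

/-- Two rays represent the same end of the tree iff they eventually coincide. -/
def SameEnd (r r' : ℕ → U) : Prop :=
  ∃ k k' : ℕ, ∀ n, r (n + k) = r' (n + k')

/-- `p` is an associated sequence for (the end represented by) the ray `r`:
`p n` lies in the cut pair space `M_{w_n}`. -/
def IsAssociatedSeq (r : ℕ → U) (p : ℕ → Σ u, M u) : Prop :=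
  ∀ n, (p n).1 = r (2 * n + 1)

end TreeSystem

/-!
Let `C = d_T(v₀, v₁)`. The vertex `v_{i+1}` of a ray lies at even distance `2k` from `v₀` with
`2(i+1) ≤ C + 2k`, so by shrinking any two points of `M_{v_{i+1}}` are `2^C 2^{-(i+1)}`-close.
Both cut pairs `M_{w_i}` and `M_{w_{i+1}}` embed into `M_{v_{i+1}}` and each of their points is
identified with its image, so consecutive terms of an associated sequence are that close as
well; summing the geometric series gives `d(p_i, p_j) ≤ 2^C 2^{-i}` for `i ≤ j`. Two rays of the
same end pass through a common cut pair `w_j = w'_{j'}` with `j, j' ≥ n`, and going through it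
bounds `d(p_n, p'_n)` by a constant times `2^{-n}`.
-/
section LinkingChains

variable {U : Type*} {M : U → Type*} {m : ∀ u, MetricSpace (M u)}
  {R : (Σ u, M u) → (Σ u, M u) → Prop} {x y z : Σ u, M u}

lemma fiberDistM_nonneg (a b : Σ u, M u) : 0 ≤ fiberDistM M m a b := by
  unfold fiberDistM
  split
  · exact dist_nonneg
  · exact le_rfl

lemma fiberDistM_self (a : Σ u, M u) : fiberDistM M m a a = 0 := by
  simp [fiberDistM]

lemma fiberDistM_comm (a b : Σ u, M u) : fiberDistM M m a b = fiberDistM M m b a := by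
  obtain ⟨u, x⟩ := a
  obtain ⟨v, y⟩ := b
  by_cases h : u = v
  · subst h
    simp [fiberDistM, dist_comm]
  · simp [fiberDistM, h, Ne.symm h]

lemma chainLengthM_nonneg (c : List ((Σ u, M u) × (Σ u, M u))) : 0 ≤ chainLengthM M m c :=
  List.sum_nonneg <| by
    simp only [List.mem_map]
    rintro _ ⟨pr, -, rfl⟩
    exact fiberDistM_nonneg pr.1 pr.2

lemma chainLengthM_append (c₁ c₂ : List ((Σ u, M u) × (Σ u, M u))) :
    chainLengthM M m (c₁ ++ c₂) = chainLengthM M m c₁ + chainLengthM M m c₂ := by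
  simp [chainLengthM]

lemma chainLengthM_reverse_map_swap (c : List ((Σ u, M u) × (Σ u, M u))) :
    chainLengthM M m (c.map Prod.swap).reverse = chainLengthM M m c := by
  simp only [chainLengthM, List.map_reverse, List.sum_reverse, List.map_map]
  congr 1
  exact List.map_congr_left fun pr _ => fiberDistM_comm pr.2 pr.1

namespace IsLinkingChainM

lemma singleton (h : x.1 = y.1) : IsLinkingChainM M R [(x, y)] x y :=
  ⟨List.cons_ne_nil _ _, rfl, rfl, by simpa using h, List.isChain_singleton _⟩

lemma pair (h : R x y) : IsLinkingChainM M R [(x, x), (y, y)] x y :=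
  ⟨List.cons_ne_nil _ _, rfl, rfl, by simp, List.isChain_pair.mpr h⟩

lemma append {c₁ c₂ : List ((Σ u, M u) × (Σ u, M u))} (hz : R z z)
    (h₁ : IsLinkingChainM M R c₁ x z) (h₂ : IsLinkingChainM M R c₂ z y) :
    IsLinkingChainM M R (c₁ ++ c₂) x y := by
  obtain ⟨hne₁, hhead₁, hlast₁, hfib₁, hchain₁⟩ := h₁
  obtain ⟨hne₂, hhead₂, hlast₂, hfib₂, hchain₂⟩ := h₂
  refine ⟨by simp [hne₁], by rwa [List.head_append_of_ne_nil], ?_, ?_, ?_⟩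
  · rwa [List.getLast_append_of_ne_nil _ hne₂]
  · intro pr hpr
    exact (List.mem_append.mp hpr).elim (hfib₁ pr) (hfib₂ pr)
  · refine hchain₁.append hchain₂ fun a ha b hb => ?_
    rw [List.getLast?_eq_some_getLast hne₁, Option.mem_some_iff] at ha
    rw [List.head?_eq_some_head hne₂, Option.mem_some_iff] at hb
    rwa [← ha, ← hb, hlast₁, hhead₂]

lemma reverse {c : List ((Σ u, M u) × (Σ u, M u))} (hR : ∀ a b, R a b → R b a)
    (h : IsLinkingChainM M R c x y) :
    IsLinkingChainM M R (c.map Prod.swap).reverse y x := by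
  obtain ⟨hne, hhead, hlast, hfib, hchain⟩ := h
  refine ⟨by simpa using hne, ?_, ?_, ?_, ?_⟩
  · simpa [List.head_reverse, List.getLast_map] using hlast
  · simpa [List.getLast_reverse, List.head_map] using hhead
  · simp only [List.mem_reverse, List.mem_map]
    rintro _ ⟨pr, hpr, rfl⟩
    exact (hfib pr hpr).symm
  · show List.IsChain _ _
    rw [List.isChain_reverse, List.isChain_map]
    exact hchain.imp fun _ _ hab => hR _ _ hab

end IsLinkingChainM

variable (M) in
/-- `quotDistM` is an infimum over linking chains, hence `0` between points joined by none
(`sInf ∅ = 0`); its triangle inequality therefore needs such chains. -/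
def IsLinkedM (R : (Σ u, M u) → (Σ u, M u) → Prop) (x y : Σ u, M u) : Prop :=
  ∃ c, IsLinkingChainM M R c x y

namespace IsLinkedM

lemma of_fst_eq (h : x.1 = y.1) : IsLinkedM M R x y := ⟨_, .singleton h⟩

lemma of_rel (h : R x y) : IsLinkedM M R x y := ⟨_, .pair h⟩

lemma symm (hR : ∀ a b, R a b → R b a) : IsLinkedM M R x y → IsLinkedM M R y x
  | ⟨_, hc⟩ => ⟨_, hc.reverse hR⟩

lemma trans (hR : ∀ a, R a a) : IsLinkedM M R x z → IsLinkedM M R z y → IsLinkedM M R x y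
  | ⟨_, hc₁⟩, ⟨_, hc₂⟩ => ⟨_, hc₁.append (hR z) hc₂⟩

end IsLinkedM

lemma quotDistM_nonneg (x y : Σ u, M u) : 0 ≤ quotDistM M m R x y :=
  Real.sInf_nonneg <| by
    rintro _ ⟨c, -, rfl⟩
    exact chainLengthM_nonneg c

lemma quotDistM_le_chainLengthM {c : List ((Σ u, M u) × (Σ u, M u))}
    (h : IsLinkingChainM M R c x y) : quotDistM M m R x y ≤ chainLengthM M m c :=
  csInf_le ⟨0, by rintro _ ⟨c', -, rfl⟩; exact chainLengthM_nonneg c'⟩ ⟨c, h, rfl⟩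

lemma quotDistM_self (x : Σ u, M u) : quotDistM M m R x x = 0 :=
  le_antisymm (by simpa [chainLengthM, fiberDistM_self] using
    quotDistM_le_chainLengthM (m := m) (IsLinkingChainM.singleton (R := R) (x := x) rfl))
    (quotDistM_nonneg x x)

lemma quotDistM_eq_zero_of_rel (h : R x y) : quotDistM M m R x y = 0 :=
  le_antisymm (by simpa [chainLengthM, fiberDistM_self] using
    quotDistM_le_chainLengthM (m := m) (IsLinkingChainM.pair h))
    (quotDistM_nonneg x y)

lemma quotDistM_comm (hR : ∀ a b, R a b → R b a) (x y : Σ u, M u) :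
    quotDistM M m R x y = quotDistM M m R y x := by
  have key : ∀ {x y : Σ u, M u}, {L : ℝ | ∃ c, IsLinkingChainM M R c x y ∧ chainLengthM M m c = L}
      ⊆ {L | ∃ c, IsLinkingChainM M R c y x ∧ chainLengthM M m c = L} := by
    rintro x y _ ⟨c, hc, rfl⟩
    exact ⟨_, hc.reverse hR, chainLengthM_reverse_map_swap c⟩
  exact congrArg sInf (key.antisymm key)

lemma quotDistM_triangle (hR : ∀ a, R a a) (hxz : IsLinkedM M R x z)
    (hzy : IsLinkedM M R z y) :
    quotDistM M m R x y ≤ quotDistM M m R x z + quotDistM M m R z y := by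
  refine le_of_forall_pos_le_add fun ε hε => ?_
  obtain ⟨c₁₀, hc₁₀⟩ := hxz
  obtain ⟨c₂₀, hc₂₀⟩ := hzy
  obtain ⟨_, ⟨c₁, hc₁, rfl⟩, hlt₁⟩ := Real.lt_sInf_add_pos
    (s := {L | ∃ c, IsLinkingChainM M R c x z ∧ chainLengthM M m c = L}) ⟨_, c₁₀, hc₁₀, rfl⟩
    (half_pos hε)
  obtain ⟨_, ⟨c₂, hc₂, rfl⟩, hlt₂⟩ := Real.lt_sInf_add_pos
    (s := {L | ∃ c, IsLinkingChainM M R c z y ∧ chainLengthM M m c = L}) ⟨_, c₂₀, hc₂₀, rfl⟩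
    (half_pos hε)
  calc quotDistM M m R x y ≤ chainLengthM M m (c₁ ++ c₂) :=
        quotDistM_le_chainLengthM (hc₁.append (hR z) hc₂)
    _ = chainLengthM M m c₁ + chainLengthM M m c₂ := chainLengthM_append c₁ c₂
    _ ≤ quotDistM M m R x z + quotDistM M m R z y + ε := by
        unfold quotDistM
        linarith

end LinkingChains

section Geometric

variable {U : Type*} {M : U → Type*} {m : ∀ u, MetricSpace (M u)}
  {R : (Σ u, M u) → (Σ u, M u) → Prop} {f : ℕ → Σ u, M u}

lemma isLinkedM_of_succ (hR : ∀ a, R a a) (hf : ∀ i, IsLinkedM M R (f i) (f (i + 1)))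
    {i j : ℕ} (hij : i ≤ j) : IsLinkedM M R (f i) (f j) := by
  induction j, hij using Nat.le_induction with
  | base => exact .of_fst_eq rfl
  | succ j _ ih => exact ih.trans hR (hf j)

lemma quotDistM_le_of_succ_le_geometric (hR : ∀ a, R a a)
    (hf : ∀ i, IsLinkedM M R (f i) (f (i + 1))) {K : ℝ}
    (hstep : ∀ i, quotDistM M m R (f i) (f (i + 1)) ≤ K * (1 / 2) ^ (i + 1))
    {i j : ℕ} (hij : i ≤ j) :
    quotDistM M m R (f i) (f j) ≤ K * ((1 / 2) ^ i - (1 / 2) ^ j) := by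
  induction j, hij using Nat.le_induction with
  | base => simp [quotDistM_self]
  | succ j hij ih =>
    calc quotDistM M m R (f i) (f (j + 1))
        ≤ quotDistM M m R (f i) (f j) + quotDistM M m R (f j) (f (j + 1)) :=
          quotDistM_triangle hR (isLinkedM_of_succ hR hf hij) (hf j)
      _ ≤ K * ((1 / 2) ^ i - (1 / 2) ^ j) + K * (1 / 2) ^ (j + 1) := add_le_add ih (hstep j)
      _ = K * ((1 / 2) ^ i - (1 / 2) ^ (j + 1)) := by ring

end Geometric

section Graph

variable {U : Type*} {G : SimpleGraph U} {Vset Wset : Set U}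

lemma SimpleGraph.IsTree.length_eq_dist_of_isPath (hT : G.IsTree) {u v : U} {p : G.Walk u v}
    (hp : p.IsPath) : p.length = G.dist u v := by
  obtain ⟨q, hq, hlen⟩ := hT.connected.exists_path_of_dist u v
  rw [← hlen, (hT.existsUnique_path u v).unique hp hq]

lemma exists_walk_support_eq_map_range {r : ℕ → U} (hadj : ∀ n, G.Adj (r n) (r (n + 1)))
    (n : ℕ) : ∃ p : G.Walk (r 0) (r n), p.support = (List.range (n + 1)).map r := by
  induction n with
  | zero => exact ⟨.nil, rfl⟩
  | succ n ih =>
    obtain ⟨p, hp⟩ := ih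
    refine ⟨p.concat (hadj n), ?_⟩
    rw [SimpleGraph.Walk.support_concat, hp, List.range_succ (n := n + 1), List.map_append]
    rfl

lemma even_dist_of_mem (hconn : G.Connected) (hdisj : Disjoint Vset Wset)
    (hbip : ∀ u v, G.Adj u v → (u ∈ Vset ∧ v ∈ Wset) ∨ (u ∈ Wset ∧ v ∈ Vset))
    {u v : U} (hu : u ∈ Vset) (hv : v ∈ Vset) : Even (G.dist u v) := by
  classical
  let c : G.Coloring Bool := SimpleGraph.Coloring.mk (fun u => decide (u ∈ Vset)) fun h => by
    rcases hbip _ _ h with ⟨h₁, h₂⟩ | ⟨h₁, h₂⟩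
    · simp [h₁, Set.disjoint_right.mp hdisj h₂]
    · simp [h₂, Set.disjoint_right.mp hdisj h₁]
  obtain ⟨p, hp⟩ := hconn.exists_walk_length_eq_dist u v
  rw [← hp, c.even_length_iff_congr p]
  exact iff_of_true (decide_eq_true hu) (decide_eq_true hv)

namespace IsAlternatingRay

variable {r : ℕ → U}

lemma dist_eq (hT : G.IsTree) (hr : IsAlternatingRay G Vset Wset r) (n : ℕ) :
    G.dist (r 0) (r n) = n := by
  obtain ⟨p, hp⟩ := exists_walk_support_eq_map_range hr.1 n
  have hpath : p.IsPath := by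
    rw [SimpleGraph.Walk.isPath_def, hp]
    exact List.nodup_range.map hr.2.1
  rw [← hT.length_eq_dist_of_isPath hpath, ← Nat.add_one_inj, ← p.length_support, hp,
    List.length_map, List.length_range]

lemma mem_iff_even (hdisj : Disjoint Vset Wset) (hr : IsAlternatingRay G Vset Wset r) (n : ℕ) :
    r n ∈ Vset ↔ Even n := by
  obtain ⟨k, rfl | rfl⟩ := Nat.even_or_odd' n
  · simpa using hr.2.2.1 k
  · simpa [parity_simps] using Set.disjoint_right.mp hdisj (hr.2.2.2 k)

lemma exists_odd_eq_of_sameEnd {r' : ℕ → U} (hdisj : Disjoint Vset Wset)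
    (hr : IsAlternatingRay G Vset Wset r) (hr' : IsAlternatingRay G Vset Wset r')
    (h : SameEnd r r') (n : ℕ) :
    ∃ j j', n ≤ j ∧ n ≤ j' ∧ r (2 * j + 1) = r' (2 * j' + 1) := by
  obtain ⟨k, k', hkk'⟩ := h
  have hpar : Even (k + k') := by
    rw [Nat.even_add, ← hr.mem_iff_even hdisj, ← hr'.mem_iff_even hdisj]
    simpa using congrArg (· ∈ Vset) (hkk' 0)
  obtain ⟨s, hs⟩ := hpar
  refine ⟨n + k, n + s, by omega, by omega, ?_⟩
  convert hkk' (2 * n + k + 1) using 2 <;> omega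

lemma mem_and_adj_of_eq_or_eq (hr : IsAlternatingRay G Vset Wset r) {i : ℕ} {w : U}
    (hw : w = r (2 * i + 1) ∨ w = r (2 * (i + 1) + 1)) :
    w ∈ Wset ∧ G.Adj (r (2 * (i + 1))) w := by
  rcases hw with rfl | rfl
  · exact ⟨hr.2.2.2 i, (hr.1 (2 * i + 1)).symm⟩
  · exact ⟨hr.2.2.2 (i + 1), hr.1 (2 * (i + 1))⟩

lemma exists_dist_eq_two_mul (hT : G.IsTree) (hdisj : Disjoint Vset Wset)
    (hbip : ∀ u v, G.Adj u v → (u ∈ Vset ∧ v ∈ Wset) ∨ (u ∈ Wset ∧ v ∈ Vset))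
    {v₀ : U} (hv₀ : v₀ ∈ Vset) (hr : IsAlternatingRay G Vset Wset r) (i : ℕ) :
    ∃ k, G.dist v₀ (r (2 * (i + 1))) = 2 * k ∧ i + 1 ≤ k + G.dist v₀ (r 0) := by
  obtain ⟨k, hk⟩ := even_dist_of_mem hT.connected hdisj hbip hv₀ (hr.2.2.1 (i + 1))
  have htri := hT.connected.dist_triangle (u := r 0) (v := v₀) (w := r (2 * (i + 1)))
  rw [hr.dist_eq hT, SimpleGraph.dist_comm] at htri
  exact ⟨k, by omega, by omega⟩

end IsAlternatingRay

end Graph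

lemma half_pow_le_two_pow_mul_half_pow {k n C : ℕ} (h : n ≤ k + C) :
    (1 / 2 : ℝ) ^ k ≤ 2 ^ C * (1 / 2) ^ n :=
  calc (1 / 2 : ℝ) ^ k = 2 ^ C * (1 / 2) ^ (k + C) := by
        rw [pow_add, mul_left_comm, ← mul_pow]
        norm_num
    _ ≤ 2 ^ C * (1 / 2) ^ n :=
        mul_le_mul_of_nonneg_left (pow_le_pow_of_le_one (by norm_num) (by norm_num) h)
          (by positivity)

section CutPairs

variable {U : Type*} {G : SimpleGraph U} {Vset Wset : Set U} {M : U → Type*}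
  {m : ∀ u, MetricSpace (M u)} {ie : ∀ v w : U, M w → M v}

lemma cutRel_ie {v : U} {a : Σ u, M u} (hv : v ∈ Vset) (ha : a.1 ∈ Wset)
    (hva : G.Adj v a.1) : cutRel M G Vset Wset ie a ⟨v, ie v a.1 a.2⟩ :=
  ⟨v, a.1, a.2, hv, ha, hva, rfl, rfl⟩

lemma isLinkedM_and_quotDistM_le_of_adj {v : U} {a b : Σ u, M u} (hv : v ∈ Vset)
    (ha : a.1 ∈ Wset ∧ G.Adj v a.1) (hb : b.1 ∈ Wset ∧ G.Adj v b.1) {B : ℝ}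
    (hB : ∀ x y : M v,
      quotDistM M m (Relation.EqvGen (cutRel M G Vset Wset ie)) ⟨v, x⟩ ⟨v, y⟩ ≤ B) :
    IsLinkedM M (Relation.EqvGen (cutRel M G Vset Wset ie)) a b ∧
      quotDistM M m (Relation.EqvGen (cutRel M G Vset Wset ie)) a b ≤ B := by
  set R := Relation.EqvGen (cutRel M G Vset Wset ie)
  have hrefl : ∀ a, R a a := Relation.EqvGen.refl
  set a' : Σ u, M u := ⟨v, ie v a.1 a.2⟩
  set b' : Σ u, M u := ⟨v, ie v b.1 b.2⟩
  have haa' : R a a' := .rel _ _ (cutRel_ie hv ha.1 ha.2)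
  have hb'b : R b' b := .symm _ _ (.rel _ _ (cutRel_ie hv hb.1 hb.2))
  have ha'b' : IsLinkedM M R a' b' := .of_fst_eq rfl
  have ha'b : IsLinkedM M R a' b := ha'b'.trans hrefl (.of_rel hb'b)
  refine ⟨(IsLinkedM.of_rel haa').trans hrefl ha'b, ?_⟩
  have h₁ := quotDistM_triangle (m := m) hrefl (.of_rel haa') ha'b
  have h₂ := quotDistM_triangle (m := m) hrefl ha'b' (.of_rel hb'b)
  linarith [quotDistM_eq_zero_of_rel (m := m) haa', quotDistM_eq_zero_of_rel (m := m) hb'b,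
    hB (ie v a.1 a.2) (ie v b.1 b.2)]

variable {r r' : ℕ → U} {p p' : ℕ → Σ u, M u}

lemma IsAlternatingRay.le_of_shrinking {D : (Σ u, M u) → (Σ u, M u) → ℝ} (hT : G.IsTree)
    (hdisj : Disjoint Vset Wset)
    (hbip : ∀ u v, G.Adj u v → (u ∈ Vset ∧ v ∈ Wset) ∨ (u ∈ Wset ∧ v ∈ Vset))
    {v₀ : U} (hv₀ : v₀ ∈ Vset)
    (hshrink : ∀ v ∈ Vset, ∀ k : ℕ, G.dist v₀ v = 2 * k → ∀ x y : M v,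
      D ⟨v, x⟩ ⟨v, y⟩ ≤ (1 / 2 : ℝ) ^ k)
    (hr : IsAlternatingRay G Vset Wset r) (i : ℕ) (x y : M (r (2 * (i + 1)))) :
    D ⟨_, x⟩ ⟨_, y⟩ ≤ 2 ^ G.dist v₀ (r 0) * (1 / 2) ^ (i + 1) := by
  obtain ⟨k, hk, hle⟩ := hr.exists_dist_eq_two_mul hT hdisj hbip hv₀ i
  exact (hshrink _ (hr.2.2.1 (i + 1)) k hk x y).trans (half_pow_le_two_pow_mul_half_pow hle)

lemma IsAssociatedSeq.isLinkedM_and_quotDistM_le (hT : G.IsTree) (hdisj : Disjoint Vset Wset)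
    (hbip : ∀ u v, G.Adj u v → (u ∈ Vset ∧ v ∈ Wset) ∨ (u ∈ Wset ∧ v ∈ Vset))
    {v₀ : U} (hv₀ : v₀ ∈ Vset)
    (hshrink : ∀ v ∈ Vset, ∀ k : ℕ, G.dist v₀ v = 2 * k → ∀ x y : M v,
      quotDistM M m (Relation.EqvGen (cutRel M G Vset Wset ie)) ⟨v, x⟩ ⟨v, y⟩ ≤ (1 / 2 : ℝ) ^ k)
    (hr : IsAlternatingRay G Vset Wset r)
    (hp : IsAssociatedSeq M r p) {i j : ℕ} (hij : i ≤ j) :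
    IsLinkedM M (Relation.EqvGen (cutRel M G Vset Wset ie)) (p i) (p j) ∧
      quotDistM M m (Relation.EqvGen (cutRel M G Vset Wset ie)) (p i) (p j) ≤
        2 ^ G.dist v₀ (r 0) * (1 / 2) ^ i := by
  have hrefl : ∀ a, Relation.EqvGen (cutRel M G Vset Wset ie) a a := Relation.EqvGen.refl
  have hstep i := isLinkedM_and_quotDistM_le_of_adj (hr.2.2.1 (i + 1))
    (hr.mem_and_adj_of_eq_or_eq (.inl (hp i))) (hr.mem_and_adj_of_eq_or_eq (.inr (hp (i + 1))))
    (hr.le_of_shrinking hT hdisj hbip hv₀ hshrink i)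
  refine ⟨isLinkedM_of_succ hrefl (fun i => (hstep i).1) hij, ?_⟩
  refine (quotDistM_le_of_succ_le_geometric hrefl (fun i => (hstep i).1) (fun i => (hstep i).2)
    hij).trans ?_
  gcongr
  exact sub_le_self _ (by positivity)

lemma IsAssociatedSeq.quotDistM_le_of_sameEnd (hT : G.IsTree) (hdisj : Disjoint Vset Wset)
    (hbip : ∀ u v, G.Adj u v → (u ∈ Vset ∧ v ∈ Wset) ∨ (u ∈ Wset ∧ v ∈ Vset))
    {v₀ : U} (hv₀ : v₀ ∈ Vset)
    (hshrink : ∀ v ∈ Vset, ∀ k : ℕ, G.dist v₀ v = 2 * k → ∀ x y : M v,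
      quotDistM M m (Relation.EqvGen (cutRel M G Vset Wset ie)) ⟨v, x⟩ ⟨v, y⟩ ≤ (1 / 2 : ℝ) ^ k)
    (hr : IsAlternatingRay G Vset Wset r)
    (hr' : IsAlternatingRay G Vset Wset r') (hp : IsAssociatedSeq M r p)
    (hp' : IsAssociatedSeq M r' p') (hrr' : SameEnd r r') (n : ℕ) :
    quotDistM M m (Relation.EqvGen (cutRel M G Vset Wset ie)) (p n) (p' n) ≤
      (2 * 2 ^ G.dist v₀ (r 0) + 2 ^ G.dist v₀ (r' 0)) * (1 / 2) ^ n := by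
  set R := Relation.EqvGen (cutRel M G Vset Wset ie)
  have hrefl : ∀ a, R a a := Relation.EqvGen.refl
  have hsymm : ∀ a b, R a b → R b a := Relation.EqvGen.symm
  obtain ⟨j, j', hj, hj', hjj'⟩ := hr.exists_odd_eq_of_sameEnd hdisj hr' hrr' n
  obtain ⟨hl₁, hd₁⟩ := hp.isLinkedM_and_quotDistM_le hT hdisj hbip hv₀ hshrink hr hj
  obtain ⟨hl₃, hd₃⟩ := hp'.isLinkedM_and_quotDistM_le hT hdisj hbip hv₀ hshrink hr' hj'
  obtain ⟨hl₂, hd₂⟩ := isLinkedM_and_quotDistM_le_of_adj (hr.2.2.1 (j + 1))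
    (hr.mem_and_adj_of_eq_or_eq (.inl (hp j)))
    (hr.mem_and_adj_of_eq_or_eq (.inl ((hp' j').trans hjj'.symm)))
    (hr.le_of_shrinking hT hdisj hbip hv₀ hshrink j)
  have h₁ := quotDistM_triangle (m := m) hrefl hl₁ (hl₂.trans hrefl (hl₃.symm hsymm))
  have h₂ := quotDistM_triangle (m := m) hrefl hl₂ (hl₃.symm hsymm)
  rw [quotDistM_comm hsymm (p' j')] at h₂
  have h₃ : (2 : ℝ) ^ G.dist v₀ (r 0) * (1 / 2) ^ (j + 1) ≤ 2 ^ G.dist v₀ (r 0) * (1 / 2) ^ n :=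
    mul_le_mul_of_nonneg_left (pow_le_pow_of_le_one (by norm_num) (by norm_num) (by omega))
      (by positivity)
  linarith

end CutPairs

theorem stmt14_general {U : Type*} (G : SimpleGraph U) (hT : G.IsTree)
    (Vset Wset : Set U) (hdisj : Disjoint Vset Wset)
    (hbip : ∀ u v, G.Adj u v → (u ∈ Vset ∧ v ∈ Wset) ∨ (u ∈ Wset ∧ v ∈ Vset))
    (M : U → Type*) [∀ u, MetricSpace (M u)]
    (ie : ∀ v w : U, M w → M v)
    (v₀ : U) (hv₀ : v₀ ∈ Vset)
    (hshrink : ∀ v ∈ Vset, ∀ k : ℕ, G.dist v₀ v = 2 * k → ∀ x y : M v,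
      quotDistM M (fun _ => inferInstance) (Relation.EqvGen (cutRel M G Vset Wset ie))
        ⟨v, x⟩ ⟨v, y⟩ ≤ (1 / 2 : ℝ) ^ k) :
    (∀ (r : ℕ → U) (p : ℕ → Σ u, M u), IsAlternatingRay G Vset Wset r →
      IsAssociatedSeq M r p →
      ∀ ε > (0 : ℝ), ∃ N : ℕ, ∀ m n : ℕ, N ≤ m → N ≤ n →
        quotDistM M (fun _ => inferInstance)
          (Relation.EqvGen (cutRel M G Vset Wset ie)) (p m) (p n) < ε) ∧
    (∀ (r r' : ℕ → U) (p p' : ℕ → Σ u, M u),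
      IsAlternatingRay G Vset Wset r → IsAlternatingRay G Vset Wset r' →
      IsAssociatedSeq M r p → IsAssociatedSeq M r' p' → SameEnd r r' →
      Filter.Tendsto (fun n => quotDistM M (fun _ => inferInstance)
          (Relation.EqvGen (cutRel M G Vset Wset ie)) (p n) (p' n))
        Filter.atTop (nhds 0)) := by
  have hsymm : ∀ a b, Relation.EqvGen (cutRel M G Vset Wset ie) a b →
      Relation.EqvGen (cutRel M G Vset Wset ie) b a := Relation.EqvGen.symm
  have hgeom (K : ℝ) : Filter.Tendsto (fun n => K * (1 / 2 : ℝ) ^ n) Filter.atTop (nhds 0) := by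
    simpa using (tendsto_pow_atTop_nhds_zero_of_lt_one (r := (1 / 2 : ℝ)) (by norm_num)
      (by norm_num)).const_mul K
  refine ⟨fun r p hr hp ε hε => ?_, fun r r' p p' hr hr' hp hp' hrr' => ?_⟩
  · obtain ⟨N, hN⟩ := Filter.eventually_atTop.1 ((hgeom _).eventually (gt_mem_nhds hε))
    refine ⟨N, fun i j hi hj => ?_⟩
    wlog hij : i ≤ j generalizing i j
    · rw [quotDistM_comm hsymm]
      exact this j i hj hi (le_of_not_ge hij)
    calc _ ≤ 2 ^ G.dist v₀ (r 0) * (1 / 2 : ℝ) ^ i :=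
          (hp.isLinkedM_and_quotDistM_le hT hdisj hbip hv₀ hshrink hr hij).2
      _ ≤ 2 ^ G.dist v₀ (r 0) * (1 / 2) ^ N :=
          mul_le_mul_of_nonneg_left (pow_le_pow_of_le_one (by norm_num) (by norm_num) hi)
            (by positivity)
      _ < ε := hN N le_rfl
  · exact squeeze_zero (fun _ => quotDistM_nonneg _ _)
      (hp.quotDistM_le_of_sameEnd hT hdisj hbip hv₀ hshrink hr hr' hp' hrr') (hgeom _)

/-- For a tree system of cut pairs over `G` with compatible shrinking metrics
(total space `(M_T, d)` with the quotient metric `d = quotDistM`), every associated sequence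
for an end `x ∈ ∂T` is Cauchy, and any two associated sequences `(p_n)`, `(p'_n)` for the same
end satisfy `d(p_n, p'_n) → 0`. -/
theorem stmt14 {U : Type*} [Countable U] (G : SimpleGraph U) (hT : G.IsTree)
    (Vset Wset : Set U) (hpart : Vset ∪ Wset = Set.univ) (hdisj : Disjoint Vset Wset)
    (hbip : ∀ u v, G.Adj u v → (u ∈ Vset ∧ v ∈ Wset) ∨ (u ∈ Wset ∧ v ∈ Vset))
    (hval : ∀ w ∈ Wset, (G.neighborSet w).Finite ∧ 2 ≤ (G.neighborSet w).ncard)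
    (M : U → Type*) [∀ u, MetricSpace (M u)] [∀ u, CompactSpace (M u)]
    (htwo : ∀ w ∈ Wset, ∃ x y : M w, x ≠ y ∧ ∀ z : M w, z = x ∨ z = y)
    (ie : ∀ v w : U, M w → M v)
    (hie : ∀ v w, v ∈ Vset → w ∈ Wset → G.Adj v w → Function.Injective (ie v w))
    (hiso : ∀ v w, v ∈ Vset → w ∈ Wset → G.Adj v w → ∀ x y : M w,
      dist (ie v w x) (ie v w y) = dist x y)
    (hint : ∀ v w w', v ∈ Vset → w ∈ Wset → w' ∈ Wset → G.Adj v w → G.Adj v w' →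
      w ≠ w' → (Set.range (ie v w) ∩ Set.range (ie v w')).Subsingleton)
    (hnull : ∀ v ∈ Vset, ∀ ε > (0 : ℝ),
      {w | w ∈ Wset ∧ G.Adj v w ∧ ε ≤ Metric.diam (Set.range (ie v w))}.Finite)
    (v₀ : U) (hv₀ : v₀ ∈ Vset)
    (hshrink : ∀ v ∈ Vset, ∀ k : ℕ, G.dist v₀ v = 2 * k → ∀ x y : M v,
      quotDistM M (fun _ => inferInstance) (Relation.EqvGen (cutRel M G Vset Wset ie))
        ⟨v, x⟩ ⟨v, y⟩ ≤ (1 / 2 : ℝ) ^ k) :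
    (∀ (r : ℕ → U) (p : ℕ → Σ u, M u), IsAlternatingRay G Vset Wset r →
      IsAssociatedSeq M r p →
      ∀ ε > (0 : ℝ), ∃ N : ℕ, ∀ m n : ℕ, N ≤ m → N ≤ n →
        quotDistM M (fun _ => inferInstance)
          (Relation.EqvGen (cutRel M G Vset Wset ie)) (p m) (p n) < ε) ∧
    (∀ (r r' : ℕ → U) (p p' : ℕ → Σ u, M u),
      IsAlternatingRay G Vset Wset r → IsAlternatingRay G Vset Wset r' →
      IsAssociatedSeq M r p → IsAssociatedSeq M r' p' → SameEnd r r' →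
      Filter.Tendsto (fun n => quotDistM M (fun _ => inferInstance)
          (Relation.EqvGen (cutRel M G Vset Wset ie)) (p n) (p' n))
        Filter.atTop (nhds 0)) :=
  stmt14_general G hT Vset Wset hdisj hbip M ie v₀ hv₀ hshrink
end
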